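/- arXiv:1812.10277 — 12 statements merged into one kernel-verified Lean document; each statement's English description precedes it below -/
import Mathlib

section
/- Let X and Y be real normed spaces, let G be a set-valued map from X to Y with nonempty convex values which is Lipschitz around a point x, and let y ∈ G(x). Then D♭G(x,y)(0) = T_{G(x)}(y), and in particular G(x) − y ⊆ D♭G(x,y)(0). -/
open Filter Topology Metric Pointwise

/-- The adjacent (intermediate) tangent cone to `K` at `x`. -/
def adjacentCone {X : Type*} [NormedAddCommGroup X] [NormedSpace ℝ X]
    (K : Set X) (x : X) : Set X :=
  {v | Tendsto (fun ε : ℝ => infDist (x + ε • v) K / ε) (𝓝[>] (0 : ℝ)) (𝓝 0)}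

/-- A set-valued map `G` is Lipschitz around `x`. -/
def LipschitzAround {X Y : Type*} [NormedAddCommGroup X] [NormedAddCommGroup Y]
    (G : X → Set Y) (x : X) : Prop :=
  ∃ c : ℝ, 0 ≤ c ∧ ∃ δ : ℝ, 0 < δ ∧ ∀ x₁ x₂ : X, ‖x₁ - x‖ < δ → ‖x₂ - x‖ < δ →
    G x₁ ⊆ G x₂ + {z : Y | ‖z‖ ≤ c * ‖x₁ - x₂‖}

/-- The adjacent directional derivative of a set-valued map `G` at `(x, y) ∈ graph G`. -/
def adjacentDeriv {X Y : Type*} [NormedAddCommGroup X] [NormedSpace ℝ X]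
    [NormedAddCommGroup Y] [NormedSpace ℝ Y]
    (G : X → Set Y) (x : X) (y : Y) (v : X) : Set Y :=
  {w | (v, w) ∈ adjacentCone {p : X × Y | p.2 ∈ G p.1} (x, y)}

theorem adjacentDeriv_zero_eq_adjacentCone
    {X Y : Type*} [NormedAddCommGroup X] [NormedSpace ℝ X]
    [NormedAddCommGroup Y] [NormedSpace ℝ Y]
    (G : X → Set Y) (x : X) (y : Y)
    (hne : ∀ x' : X, (G x').Nonempty) (hconv : ∀ x' : X, Convex ℝ (G x'))
    (hlip : LipschitzAround G x) (hy : y ∈ G x) :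
    adjacentDeriv G x y 0 = adjacentCone (G x) y ∧
      (fun z => z - y) '' (G x) ⊆ adjacentDeriv G x y 0 := by
  obtain ⟨c, hc, δ, hδ, hL⟩ := hlip
  set S : Set (X × Y) := {p : X × Y | p.2 ∈ G p.1} with hS
  -- the point of the curve
  have hpt : ∀ (w : Y) (ε : ℝ), (x, y) + ε • ((0 : X), w) = (x, y + ε • w) := by
    intro w ε
    simp [Prod.ext_iff]
  -- cone ⊆ deriv
  have h1 : adjacentCone (G x) y ⊆ adjacentDeriv G x y 0 := by
    intro w hw
    simp only [adjacentDeriv, adjacentCone, Set.mem_setOf_eq, hpt] at hw ⊢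
    have hle : ∀ ε : ℝ, infDist ((x, y + ε • w)) S ≤ infDist (y + ε • w) (G x) := by
      intro ε
      refine le_of_forall_pos_le_add fun η hη => ?_
      obtain ⟨z, hz, hzd⟩ := (infDist_lt_iff (hne x)).1
        (lt_add_of_pos_right (infDist (y + ε • w) (G x)) hη)
      have hmem : ((x, z) : X × Y) ∈ S := hz
      calc infDist ((x, y + ε • w)) S ≤ dist (x, y + ε • w) ((x, z) : X × Y) :=
            infDist_le_dist_of_mem hmem
        _ = dist (y + ε • w) z := by simp [Prod.dist_eq, max_eq_right dist_nonneg]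
        _ ≤ infDist (y + ε • w) (G x) + η := hzd.le
    refine squeeze_zero' ?_ ?_ hw
    · filter_upwards [self_mem_nhdsWithin] with ε (hε : 0 < ε)
      exact div_nonneg infDist_nonneg hε.le
    · filter_upwards [self_mem_nhdsWithin] with ε (hε : 0 < ε)
      gcongr
      exact hle ε
  -- deriv ⊆ cone
  have h2 : adjacentDeriv G x y 0 ⊆ adjacentCone (G x) y := by
    intro w hw
    simp only [adjacentDeriv, adjacentCone, Set.mem_setOf_eq, hpt] at hw ⊢
    have key : ∀ ε : ℝ, infDist ((x, y + ε • w)) S < δ / 2 →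
        infDist (y + ε • w) (G x) ≤ (1 + c) * infDist ((x, y + ε • w)) S := by
      intro ε hsmall
      set d := infDist ((x, y + ε • w)) S with hd
      have hd0 : 0 ≤ d := infDist_nonneg
      refine le_of_forall_pos_le_add fun η hη => ?_
      set η' := min (η / (1 + c)) (δ / 2 - d) with hη'
      have h1c : (0 : ℝ) < 1 + c := by linarith
      have hη'0 : 0 < η' := lt_min (div_pos hη h1c) (by linarith)
      have hSne : S.Nonempty := ⟨(x, y), hy⟩
      obtain ⟨p, hp, hpd⟩ := (infDist_lt_iff hSne).1 (lt_add_of_pos_right d hη'0)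
      obtain ⟨x', z'⟩ := p
      have hz' : z' ∈ G x' := hp
      have hdx : dist x x' < d + η' ∧ dist (y + ε • w) z' < d + η' := by
        rw [Prod.dist_eq, max_lt_iff] at hpd
        exact hpd
      have hx'δ : ‖x' - x‖ < δ := by
        have : dist x x' < δ / 2 + (δ / 2 - d) := by
          calc dist x x' < d + η' := hdx.1
            _ ≤ d + (δ / 2 - d) := by gcongr; exact min_le_right _ _
            _ < δ / 2 + (δ / 2 - d) := by linarith
        rw [← dist_eq_norm, dist_comm]
        linarith
      have hxself : ‖x - x‖ < δ := by simpa using hδ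
      obtain ⟨z, hzG, u, hu, hzu⟩ := Set.mem_add.1 (hL x' x hx'δ hxself hz')
      have hu' : ‖u‖ ≤ c * ‖x' - x‖ := hu
      have hdist : dist (y + ε • w) z ≤ (1 + c) * (d + η') := by
        have h3 : dist (y + ε • w) z ≤ dist (y + ε • w) z' + dist z' z :=
          dist_triangle _ _ _
        have h4 : dist z' z = ‖u‖ := by
          rw [← hzu, dist_eq_norm]; simp
        have h5 : ‖x' - x‖ < d + η' := by
          rw [← dist_eq_norm, dist_comm]; exact hdx.1
        have h6 : ‖u‖ ≤ c * (d + η') := hu'.trans (by nlinarith)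
        nlinarith [hdx.2]
      calc infDist (y + ε • w) (G x) ≤ dist (y + ε • w) z := infDist_le_dist_of_mem hzG
        _ ≤ (1 + c) * (d + η') := hdist
        _ = (1 + c) * d + (1 + c) * η' := by ring
        _ ≤ (1 + c) * d + (1 + c) * (η / (1 + c)) := by gcongr; exact min_le_left _ _
        _ = (1 + c) * d + η := by field_simp
    -- eventually infDist < δ/2
    have hev : ∀ᶠ ε in 𝓝[>] (0 : ℝ), infDist ((x, y + ε • w)) S < δ / 2 := by
      have hb : ∀ ε : ℝ, 0 < ε → infDist ((x, y + ε • w)) S ≤ ε * ‖w‖ := by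
        intro ε hε
        calc infDist ((x, y + ε • w)) S ≤ dist (x, y + ε • w) ((x, y) : X × Y) :=
              infDist_le_dist_of_mem hy
          _ = dist (y + ε • w) y := by simp [Prod.dist_eq, max_eq_right dist_nonneg]
          _ = ‖ε • w‖ := by rw [dist_eq_norm, add_sub_cancel_left]
          _ = ε * ‖w‖ := by rw [norm_smul, Real.norm_eq_abs, abs_of_pos hε]
      have hmem : Set.Ioo (0 : ℝ) (δ / 2 / (‖w‖ + 1)) ∈ 𝓝[>] (0 : ℝ) :=
        Ioo_mem_nhdsGT_of_mem ⟨le_refl _, div_pos (by linarith) (by positivity)⟩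
      filter_upwards [hmem] with ε hε
      have : ε * ‖w‖ < δ / 2 := by
        have h0 : ε * (‖w‖ + 1) < δ / 2 := by
          have := hε.2
          rw [lt_div_iff₀ (by positivity)] at this
          exact this
        nlinarith [hε.1, norm_nonneg w]
      exact lt_of_le_of_lt (hb ε hε.1) this
    refine squeeze_zero' ?_ ?_ (by simpa using hw.mul_const (1 + c))
    · filter_upwards [self_mem_nhdsWithin] with ε (hε : 0 < ε)
      exact div_nonneg infDist_nonneg hε.le
    · filter_upwards [self_mem_nhdsWithin, hev] with ε (hε : 0 < ε) hsm
      have := key ε hsm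
      calc infDist (y + ε • w) (G x) / ε
          ≤ ((1 + c) * infDist ((x, y + ε • w)) S) / ε := by gcongr
        _ = infDist ((x, y + ε • w)) S / ε * (1 + c) := by ring
  -- second part: image of G x - y is in the cone
  have h3 : (fun z => z - y) '' (G x) ⊆ adjacentCone (G x) y := by
    rintro _ ⟨z, hz, rfl⟩
    simp only [adjacentCone, Set.mem_setOf_eq]
    have hev : ∀ᶠ ε in 𝓝[>] (0 : ℝ), infDist (y + ε • (z - y)) (G x) / ε = 0 := by
      have hmem : Set.Ioc (0 : ℝ) 1 ∈ 𝓝[>] (0 : ℝ) :=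
        Ioc_mem_nhdsGT_of_mem ⟨le_refl _, one_pos⟩
      filter_upwards [hmem] with ε hε
      have : y + ε • (z - y) ∈ G x := by
        have := (hconv x) hy hz (by linarith [hε.2] : (0:ℝ) ≤ 1 - ε) hε.1.le (by ring)
        convert this using 1
        simp [smul_sub, sub_smul, one_smul]
        abel
      rw [infDist_zero_of_mem this, zero_div]
    exact (tendsto_congr' hev).2 tendsto_const_nhds
  exact ⟨Set.Subset.antisymm h2 h1, h3.trans h1⟩
end

section
/- Let X and Y be real normed spaces, let G be a set-valued map from X to Y with nonempty convex values which is Lipschitz around a point x, and let y ∈ G(x). Then for every v ∈ X, D♭G(x,y)(v) + D♭G(x,y)(0) = D♭G(x,y)(v); in particular, if w ∈ D♭G(x,y)(v) and w₀ ∈ D♭G(x,y)(0), then w + w₀ ∈ D♭G(x,y)(v). -/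
/-!
Near `x` the Lipschitz property lets one replace the distance to the graph by the distance
`d(t) = dist (y + t w) (G (x + t v))` to a single value, so `w ∈ D♭G(x,y)(v)` iff `d(t) = o(t)`.
For `w ∈ D♭G(x,y)(v)` and `w₀ ∈ D♭G(x,y)(0)` write, with `l = √t` and `s = t / (1 - l)`,
`y + t (w + w₀) = (1 - l) (y + s w) + l (y + l w₀)`. The distance to the convex set
`G (x + t v)` is a convex function, and moving `G (x + s v)` and `G x` to `G (x + t v)` costs,
after weighting, `c ‖v‖ l t` each, so the distance of `y + t (w + w₀)` to `G (x + t v)` is at most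
`(1 - l) o(s) + l o(l) + 2 c ‖v‖ l t = o(t)`.
-/

open Filter Topology Metric Pointwise

open Set

theorem Convex.convexOn_infDist {E : Type*} [NormedAddCommGroup E] [NormedSpace ℝ E]
    {K : Set E} (hK : Convex ℝ K) : ConvexOn ℝ univ (infDist · K) := by
  refine ⟨convex_univ, fun a _ b _ α β hα hβ hαβ => ?_⟩
  rcases K.eq_empty_or_nonempty with rfl | hne
  · simp
  refine le_of_forall_pos_le_add fun η hη => ?_
  obtain ⟨p, hp, hap⟩ := (infDist_lt_iff hne).1 (lt_add_of_pos_right (infDist a K) hη)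
  obtain ⟨q, hq, hbq⟩ := (infDist_lt_iff hne).1 (lt_add_of_pos_right (infDist b K) hη)
  calc infDist (α • a + β • b) K ≤ dist (α • a + β • b) (α • p + β • q) :=
        infDist_le_dist_of_mem (hK hp hq hα hβ hαβ)
    _ ≤ α * dist a p + β * dist b q := by
        grw [dist_add_add_le, dist_smul₀, dist_smul₀, Real.norm_of_nonneg hα,
          Real.norm_of_nonneg hβ]
    _ ≤ α * (infDist a K + η) + β * (infDist b K + η) := by gcongr
    _ = α • infDist a K + β • infDist b K + η := by
        simp only [smul_eq_mul]; linear_combination η * hαβ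

theorem infDist_inter_ball_eq {α : Type*} [PseudoMetricSpace α] {S : Set α} {a p : α}
    (ha : a ∈ S) {r : ℝ} (hr : 2 * dist p a < r) :
    infDist p (S ∩ ball a r) = infDist p S := by
  have hr0 : 0 < r := by linarith [dist_nonneg (x := p) (y := a)]
  have hne : (S ∩ ball a r).Nonempty := ⟨a, ha, mem_ball_self hr0⟩
  refine le_antisymm ((le_infDist ⟨a, ha⟩).2 fun q hq => ?_)
    (infDist_le_infDist_of_subset inter_subset_left hne)
  by_cases hqa : q ∈ ball a r
  · exact infDist_le_dist_of_mem ⟨hq, hqa⟩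
  · rw [mem_ball, not_lt] at hqa
    calc infDist p (S ∩ ball a r) ≤ dist p a := infDist_le_dist_of_mem ⟨ha, mem_ball_self hr0⟩
      _ ≤ dist p q := by linarith [dist_triangle q p a, dist_comm p q]

def LipschitzOnBall {X Y : Type*} [NormedAddCommGroup X] [NormedAddCommGroup Y]
    (G : X → Set Y) (x : X) (c δ : ℝ) : Prop :=
  ∀ x₁ x₂ : X, ‖x₁ - x‖ < δ → ‖x₂ - x‖ < δ → G x₁ ⊆ G x₂ + {z : Y | ‖z‖ ≤ c * ‖x₁ - x₂‖}

theorem zero_mem_adjacentCone {X : Type*} [NormedAddCommGroup X] [NormedSpace ℝ X]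
    {K : Set X} {k : X} (hk : k ∈ K) : 0 ∈ adjacentCone K k := by
  simp [adjacentCone, infDist_zero_of_mem hk]

theorem zero_mem_adjacentDeriv {X Y : Type*} [NormedAddCommGroup X] [NormedSpace ℝ X]
    [NormedAddCommGroup Y] [NormedSpace ℝ Y] {G : X → Set Y} {x : X} {y : Y} (hy : y ∈ G x) :
    0 ∈ adjacentDeriv G x y 0 :=
  zero_mem_adjacentCone (K := {p : X × Y | p.2 ∈ G p.1}) hy

namespace LipschitzOnBall

variable {X Y : Type*} [NormedAddCommGroup X] [NormedAddCommGroup Y] {G : X → Set Y} {x : X}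
  {c δ : ℝ}

theorem nonempty (hG : LipschitzOnBall G x c δ) (hx : (G x).Nonempty) (hδ : 0 < δ) {x' : X}
    (hx' : ‖x' - x‖ < δ) : (G x').Nonempty := by
  obtain ⟨y, hy⟩ := hx
  obtain ⟨z, hz, -⟩ := hG x x' (by simpa) hx' hy
  exact ⟨z, hz⟩

theorem infDist_le_dist_add (hG : LipschitzOnBall G x c δ) {x₁ x₂ : X} (h₁ : ‖x₁ - x‖ < δ)
    (h₂ : ‖x₂ - x‖ < δ) {y₁ : Y} (hy₁ : y₁ ∈ G x₁) (z : Y) :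
    infDist z (G x₂) ≤ dist z y₁ + c * ‖x₁ - x₂‖ := by
  obtain ⟨p, hp, e, he, rfl⟩ := hG x₁ x₂ h₁ h₂ hy₁
  calc infDist z (G x₂) ≤ dist z p := infDist_le_dist_of_mem hp
    _ ≤ dist z (p + e) + ‖e‖ :=
        (dist_triangle z (p + e) p).trans_eq (by rw [dist_self_add_left])
    _ ≤ dist z (p + e) + c * ‖x₁ - x₂‖ := by gcongr; exact he

theorem infDist_le_infDist_add (hG : LipschitzOnBall G x c δ) {x₁ x₂ : X} (h₁ : ‖x₁ - x‖ < δ)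
    (h₂ : ‖x₂ - x‖ < δ) (hne : (G x₁).Nonempty) (z : Y) :
    infDist z (G x₂) ≤ infDist z (G x₁) + c * ‖x₁ - x₂‖ := by
  rw [← sub_le_iff_le_add, le_infDist hne]
  exact fun y₁ hy₁ => sub_le_iff_le_add.2 (hG.infDist_le_dist_add h₁ h₂ hy₁ z)

end LipschitzOnBall

section Graph

variable {X Y : Type*} [NormedAddCommGroup X] [NormedAddCommGroup Y] {G : X → Set Y}

theorem infDist_mk_graph_le {x' : X} {y' : Y} (hne : (G x').Nonempty) :
    infDist (x', y') {p : X × Y | p.2 ∈ G p.1} ≤ infDist y' (G x') :=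
  (le_infDist hne).2 fun z hz =>
    (infDist_le_dist_of_mem (show (x', z) ∈ {p : X × Y | p.2 ∈ G p.1} from hz)).trans_eq
      (by simp [Prod.dist_eq])

theorem LipschitzOnBall.infDist_le_mul_infDist_graph {x : X} {c δ : ℝ}
    (hG : LipschitzOnBall G x c δ) (hc : 0 ≤ c) {y : Y} (hy : y ∈ G x) {x' : X} {y' : Y}
    (hp : 2 * dist (x', y') (x, y) < δ) :
    infDist y' (G x') ≤ (1 + c) * infDist (x', y') {q : X × Y | q.2 ∈ G q.1} := by
  have hx' : dist x' x ≤ dist (x', y') (x, y) := le_max_left _ _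
  have hδ : 0 < δ := by linarith [dist_nonneg (x := (x', y')) (y := (x, y))]
  have hne : ({q : X × Y | q.2 ∈ G q.1} ∩ ball (x, y) δ).Nonempty :=
    ⟨(x, y), hy, mem_ball_self hδ⟩
  rw [← infDist_inter_ball_eq (show (x, y) ∈ {q : X × Y | q.2 ∈ G q.1} from hy) hp,
    ← div_le_iff₀' (by positivity), le_infDist hne]
  rintro ⟨x₁, y₁⟩ ⟨hy₁, hq⟩
  rw [div_le_iff₀' (by positivity)]
  have h₁ : ‖x₁ - x‖ < δ := by
    rw [← dist_eq_norm]
    exact (le_max_left _ (dist y₁ y)).trans_lt hq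
  have h₂ : ‖x' - x‖ < δ := by
    rw [← dist_eq_norm]
    linarith [dist_nonneg (x := (x', y')) (y := (x, y))]
  calc infDist y' (G x') ≤ dist y' y₁ + c * ‖x₁ - x'‖ := hG.infDist_le_dist_add h₁ h₂ hy₁ _
    _ ≤ dist (x', y') (x₁, y₁) + c * dist (x', y') (x₁, y₁) := by
        rw [← dist_eq_norm, dist_comm x₁]
        gcongr
        exacts [le_max_right _ _, le_max_left _ _]
    _ = (1 + c) * dist (x', y') (x₁, y₁) := by ring

theorem LipschitzOnBall.mem_adjacentDeriv_iff [NormedSpace ℝ X] [NormedSpace ℝ Y] {x : X}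
    {c δ : ℝ} (hG : LipschitzOnBall G x c δ) (hc : 0 ≤ c) (hδ : 0 < δ) {y : Y} (hy : y ∈ G x)
    {v : X} {w : Y} :
    w ∈ adjacentDeriv G x y v ↔
      Tendsto (fun t : ℝ => infDist (y + t • w) (G (x + t • v)) / t) (𝓝[>] 0) (𝓝 0) := by
  have hnear : ∀ᶠ t : ℝ in 𝓝[>] 0, 2 * dist (x + t • v, y + t • w) (x, y) < δ := by
    have : Tendsto (fun t : ℝ => (x + t • v, y + t • w)) (𝓝 0) (𝓝 (x, y)) := by
      simpa using ((tendsto_id (x := 𝓝 (0 : ℝ))).smul_const (v, w)).const_add (x, y)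
    filter_upwards [nhdsWithin_le_nhds (this (ball_mem_nhds _ (half_pos hδ)))] with t ht
    rw [mem_preimage, mem_ball] at ht
    linarith
  have hpos : ∀ᶠ t : ℝ in 𝓝[>] 0, 0 < t := self_mem_nhdsWithin
  simp only [adjacentDeriv, adjacentCone, mem_ofPred_eq, Prod.mk_add_mk, Prod.smul_mk]
  constructor
  · intro h
    refine squeeze_zero' ?_ ?_ (by simpa using h.const_mul (1 + c))
    · filter_upwards [hpos] with t ht
      exact div_nonneg infDist_nonneg ht.le
    · filter_upwards [hnear, hpos] with t hδt ht
      rw [← mul_div_assoc]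
      exact div_le_div_of_nonneg_right (hG.infDist_le_mul_infDist_graph hc hy hδt) ht.le
  · intro h
    refine squeeze_zero' ?_ ?_ h
    · filter_upwards [hpos] with t ht
      exact div_nonneg infDist_nonneg ht.le
    · filter_upwards [hnear, hpos] with t hδt ht
      have hx : ‖x + t • v - x‖ < δ := by
        have : dist (x + t • v) x ≤ dist (x + t • v, y + t • w) (x, y) := le_max_left _ _
        rw [← dist_eq_norm]
        linarith [dist_nonneg (x := (x + t • v, y + t • w)) (y := (x, y))]
      exact div_le_div_of_nonneg_right (infDist_mk_graph_le (hG.nonempty ⟨y, hy⟩ hδ hx)) ht.le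

end Graph

theorem tendsto_sqrt_nhdsGT_zero : Tendsto (√·) (𝓝[>] (0 : ℝ)) (𝓝[>] 0) :=
  tendsto_nhdsWithin_iff.2
    ⟨by simpa using (Real.continuous_sqrt.tendsto 0).mono_left nhdsWithin_le_nhds,
      eventually_mem_nhdsWithin.mono fun _ ht => Real.sqrt_pos.2 ht⟩

section Sum

variable {X Y : Type*} [NormedAddCommGroup X] [NormedSpace ℝ X] [NormedAddCommGroup Y]
  [NormedSpace ℝ Y] {G : X → Set Y} {x : X} {c δ : ℝ}

theorem LipschitzOnBall.infDist_add_le (hG : LipschitzOnBall G x c δ) (hδ : 0 < δ) {y : Y}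
    (hy : y ∈ G x) {v : X} {w w₀ : Y} {t l s s₀ : ℝ} (hconv : Convex ℝ (G (x + t • v)))
    (hl₀ : 0 ≤ l) (hl₁ : l ≤ 1) (hs : (1 - l) * s = t) (hs₀ : l * s₀ = t) (ht : 0 ≤ t)
    (htδ : ‖t • v‖ < δ) (hsδ : ‖s • v‖ < δ) :
    infDist (y + t • (w + w₀)) (G (x + t • v)) ≤
      (1 - l) * infDist (y + s • w) (G (x + s • v)) + l * infDist (y + s₀ • w₀) (G x) +
        2 * c * ‖v‖ * l * t := by
  have hball : ∀ {r : ℝ}, ‖r • v‖ < δ → ‖x + r • v - x‖ < δ := by simp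
  have hx : ‖x - x‖ < δ := by simpa using hδ
  have hcomb : y + t • (w + w₀) = (1 - l) • (y + s • w) + l • (y + s₀ • w₀) := by
    linear_combination (norm := module) (-hs) • w - hs₀ • w₀
  have hdist : (1 - l) * |s - t| = l * t := by
    rw [← abs_of_nonneg (sub_nonneg.2 hl₁), ← abs_mul,
      show (1 - l) * (s - t) = l * t by linear_combination hs, abs_of_nonneg (by positivity)]
  calc infDist (y + t • (w + w₀)) (G (x + t • v))
      ≤ (1 - l) * infDist (y + s • w) (G (x + t • v)) +
          l * infDist (y + s₀ • w₀) (G (x + t • v)) := by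
        rw [hcomb]
        exact hconv.convexOn_infDist.2 (mem_univ _) (mem_univ _) (by linarith) hl₀ (by ring)
    _ ≤ (1 - l) * (infDist (y + s • w) (G (x + s • v)) + c * ‖x + s • v - (x + t • v)‖) +
          l * (infDist (y + s₀ • w₀) (G x) + c * ‖x - (x + t • v)‖) := by
        gcongr
        · exact hG.infDist_le_infDist_add (hball hsδ) (hball htδ)
            (hG.nonempty ⟨y, hy⟩ hδ (hball hsδ)) _
        · exact hG.infDist_le_infDist_add hx (hball htδ) ⟨y, hy⟩ _
    _ = _ := by
        rw [add_sub_add_left_eq_sub, ← sub_smul, sub_add_cancel_left, norm_neg, norm_smul,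
          norm_smul, Real.norm_eq_abs, Real.norm_eq_abs, abs_of_nonneg ht]
        linear_combination c * ‖v‖ * hdist

theorem LipschitzOnBall.tendsto_infDist_add (hG : LipschitzOnBall G x c δ) (hδ : 0 < δ) {y : Y}
    (hy : y ∈ G x) (hconv : ∀ x', Convex ℝ (G x')) {v : X} {w w₀ : Y}
    (h : Tendsto (fun t : ℝ => infDist (y + t • w) (G (x + t • v)) / t) (𝓝[>] 0) (𝓝 0))
    (h₀ : Tendsto (fun t : ℝ => infDist (y + t • w₀) (G x) / t) (𝓝[>] 0) (𝓝 0)) :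
    Tendsto (fun t : ℝ => infDist (y + t • (w + w₀)) (G (x + t • v)) / t) (𝓝[>] 0) (𝓝 0) := by
  have hl : Tendsto (√·) (𝓝[>] (0 : ℝ)) (𝓝[>] 0) := tendsto_sqrt_nhdsGT_zero
  have hl_lt : ∀ᶠ t : ℝ in 𝓝[>] 0, √t < 1 :=
    (hl.mono_right nhdsWithin_le_nhds).eventually_lt_const one_pos
  have hs : Tendsto (fun t : ℝ => t / (1 - √t)) (𝓝[>] 0) (𝓝[>] 0) := by
    refine tendsto_nhdsWithin_iff.2 ⟨?_, ?_⟩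
    · simpa [Pi.div_def] using
        ((tendsto_id (x := 𝓝 (0 : ℝ))).mono_left nhdsWithin_le_nhds).div
          ((hl.mono_right nhdsWithin_le_nhds).const_sub 1) (by norm_num)
    · filter_upwards [self_mem_nhdsWithin, hl_lt] with t ht hlt
      exact div_pos ht (sub_pos.2 hlt)
  have hsmall : ∀ {f : ℝ → ℝ}, Tendsto f (𝓝[>] 0) (𝓝[>] 0) → ∀ᶠ t in 𝓝[>] 0, ‖f t • v‖ < δ :=
    fun {f} hf => by
      have hfv : Tendsto (fun t => f t • v) (𝓝[>] 0) (𝓝 0) := by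
        simpa using (hf.mono_right nhdsWithin_le_nhds).smul_const v
      simpa using hfv.eventually (ball_mem_nhds 0 hδ)
  have hbound := ((h.comp hs).add (h₀.comp hl)).add
    ((hl.mono_right nhdsWithin_le_nhds).const_mul (2 * c * ‖v‖))
  rw [mul_zero, add_zero, add_zero] at hbound
  refine squeeze_zero' ?_ ?_ hbound
  · filter_upwards [self_mem_nhdsWithin] with t ht
    exact div_nonneg infDist_nonneg (le_of_lt ht)
  filter_upwards [self_mem_nhdsWithin, hl_lt, hsmall tendsto_id, hsmall hs] with t ht hlt htδ hsδ
  have ht : 0 < t := ht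
  set l := √t
  have hl₀ : 0 < l := Real.sqrt_pos.2 ht
  have hl₁ : 0 < 1 - l := sub_pos.2 hlt
  have hll : l * l = t := Real.mul_self_sqrt ht.le
  have key := hG.infDist_add_le hδ hy (hconv _) hl₀.le hlt.le (mul_div_cancel₀ t hl₁.ne') hll
    ht.le htδ hsδ (w := w) (w₀ := w₀)
  rw [div_le_iff₀ ht]
  refine key.trans_eq ?_
  simp only [Function.comp_apply]
  set D := infDist (y + (t / (1 - l)) • w) (G (x + (t / (1 - l)) • v))
  set D₀ := infDist (y + l • w₀) (G x)
  have e : D / (t / (1 - l)) * t = (1 - l) * D := by field_simp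
  have e₀ : D₀ / l * t = l * D₀ := by rw [← hll]; field_simp
  linear_combination -e - e₀

end Sum

theorem adjacentDeriv_add_adjacentDeriv_zero_general
    {X Y : Type*} [NormedAddCommGroup X] [NormedSpace ℝ X]
    [NormedAddCommGroup Y] [NormedSpace ℝ Y]
    (G : X → Set Y) (x : X) (y : Y)
    (hconv : ∀ x' : X, Convex ℝ (G x'))
    (hlip : LipschitzAround G x) (hy : y ∈ G x) :
    ∀ v : X, adjacentDeriv G x y v + adjacentDeriv G x y 0 = adjacentDeriv G x y v ∧
      ∀ w ∈ adjacentDeriv G x y v, ∀ w₀ ∈ adjacentDeriv G x y 0,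
        w + w₀ ∈ adjacentDeriv G x y v := by
  obtain ⟨c, hc, δ, hδ, hG⟩ := hlip
  have hG : LipschitzOnBall G x c δ := hG
  have hadd : ∀ v, ∀ w ∈ adjacentDeriv G x y v, ∀ w₀ ∈ adjacentDeriv G x y 0,
      w + w₀ ∈ adjacentDeriv G x y v := by
    intro v w hw w₀ hw₀
    rw [hG.mem_adjacentDeriv_iff hc hδ hy] at hw hw₀ ⊢
    simp only [smul_zero, add_zero] at hw₀
    exact hG.tendsto_infDist_add hδ hy hconv hw hw₀
  refine fun v => ⟨subset_antisymm ?_ fun w hw => ⟨w, hw, 0, ?_, add_zero w⟩, hadd v⟩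
  · rintro _ ⟨w, hw, w₀, hw₀, rfl⟩
    exact hadd v w hw w₀ hw₀
  · exact zero_mem_adjacentDeriv hy

theorem adjacentDeriv_add_adjacentDeriv_zero
    {X Y : Type*} [NormedAddCommGroup X] [NormedSpace ℝ X]
    [NormedAddCommGroup Y] [NormedSpace ℝ Y]
    (G : X → Set Y) (x : X) (y : Y)
    (hne : ∀ x' : X, (G x').Nonempty) (hconv : ∀ x' : X, Convex ℝ (G x'))
    (hlip : LipschitzAround G x) (hy : y ∈ G x) :
    ∀ v : X, adjacentDeriv G x y v + adjacentDeriv G x y 0 = adjacentDeriv G x y v ∧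
      ∀ w ∈ adjacentDeriv G x y v, ∀ w₀ ∈ adjacentDeriv G x y 0,
        w + w₀ ∈ adjacentDeriv G x y v :=
  adjacentDeriv_add_adjacentDeriv_zero_general G x y hconv hlip hy
end

section
/- Let X and Y be real normed spaces, let G be a set-valued map from X to Y with nonempty convex values which is Lipschitz around a point x, and let y ∈ G(x). Then for every v ∈ X the set D♭G(x,y)(v) is convex. -/
open Filter Topology Metric Pointwise

/-!
Since `G` is Lipschitz around `x`, the distance from `(x + εv, y + εw)` to the graph of `G` is
comparable, for small `ε`, to the distance from `y + εw` to the fibre `G (x + εv)`. Hence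
`w ∈ D♭G(x,y)(v)` iff `dist(y + εw, G(x + εv)) = o(ε)`, and this condition is preserved under
convex combinations of `w` because the distance to the convex set `G (x + εv)` is a convex function.
-/

theorem le_mul_infDist_of_forall_dist_lt {α : Type*} [PseudoMetricSpace α] {s : Set α} {p : α}
    {f C r : ℝ} (hs : s.Nonempty) (hC : 0 ≤ C) (hpr : infDist p s < r)
    (h : ∀ q ∈ s, dist p q < r → f ≤ C * dist p q) : f ≤ C * infDist p s := by
  have hbound : ∀ᶠ t in 𝓝[>] infDist p s, f ≤ C * t := by
    filter_upwards [self_mem_nhdsWithin, nhdsWithin_le_nhds (eventually_lt_nhds hpr)]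
      with t hpt htr
    obtain ⟨q, hq, hpq⟩ := (infDist_lt_iff hs).mp hpt
    exact (h q hq (hpq.trans htr)).trans (mul_le_mul_of_nonneg_left hpq.le hC)
  exact ge_of_tendsto ((tendsto_const_nhds.mul tendsto_id).mono_left nhdsWithin_le_nhds) hbound

theorem Convex.convexOn_infDist_s2 {E : Type*} [SeminormedAddCommGroup E] [NormedSpace ℝ E]
    {s : Set E} (hs : Convex ℝ s) : ConvexOn ℝ Set.univ (infDist · s) := by
  refine ⟨convex_univ, fun p _ q _ a b ha hb hab => ?_⟩
  rcases s.eq_empty_or_nonempty with rfl | hne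
  · simp
  refine le_of_forall_pos_le_add fun η hη => ?_
  obtain ⟨z₁, hz₁, hpz₁⟩ := (infDist_lt_iff hne).mp (lt_add_of_pos_right (infDist p s) hη)
  obtain ⟨z₂, hz₂, hqz₂⟩ := (infDist_lt_iff hne).mp (lt_add_of_pos_right (infDist q s) hη)
  calc infDist (a • p + b • q) s ≤ dist (a • p + b • q) (a • z₁ + b • z₂) :=
        infDist_le_dist_of_mem (hs hz₁ hz₂ ha hb hab)
    _ ≤ a * dist p z₁ + b * dist q z₂ := by
        refine (dist_add_add_le _ _ _ _).trans_eq ?_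
        rw [dist_smul₀, dist_smul₀, Real.norm_of_nonneg ha, Real.norm_of_nonneg hb]
    _ ≤ a * (infDist p s + η) + b * (infDist q s + η) := by gcongr
    _ = a • infDist p s + b • infDist q s + η := by
        rw [smul_eq_mul, smul_eq_mul]; linear_combination η * hab

theorem tendsto_div_zero_of_eventually_le_mul {f g : ℝ → ℝ} (C : ℝ)
    (hf : ∀ᶠ ε in 𝓝[>] 0, 0 ≤ f ε) (hfg : ∀ᶠ ε in 𝓝[>] 0, f ε ≤ C * g ε)
    (hg : Tendsto (fun ε => g ε / ε) (𝓝[>] 0) (𝓝 0)) :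
    Tendsto (fun ε => f ε / ε) (𝓝[>] 0) (𝓝 0) := by
  have hCg := hg.const_mul C
  rw [mul_zero] at hCg
  refine squeeze_zero' ?_ ?_ hCg
  · filter_upwards [hf, self_mem_nhdsWithin] with ε h hε using div_nonneg h (le_of_lt hε)
  · filter_upwards [hfg, self_mem_nhdsWithin] with ε h hε
    rw [← mul_div_assoc]
    exact div_le_div_of_nonneg_right h (le_of_lt hε)

theorem infDist_graph_le_infDist {X Y : Type*} [PseudoMetricSpace X] [PseudoMetricSpace Y]
    {G : X → Set Y} {x : X} (y : Y) (hx : (G x).Nonempty) :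
    infDist (x, y) {p : X × Y | p.2 ∈ G p.1} ≤ infDist y (G x) := by
  have hmk : Isometry (Prod.mk x : Y → X × Y) :=
    Isometry.of_dist_eq fun _ _ => by simp [Prod.dist_eq]
  calc infDist (x, y) {p : X × Y | p.2 ∈ G p.1} ≤ infDist (x, y) (Prod.mk x '' G x) :=
        infDist_le_infDist_of_subset (by rintro _ ⟨z, hz, rfl⟩; exact hz) (hx.image _)
    _ = infDist y (G x) := infDist_image hmk

namespace LipschitzAround

variable {X Y : Type*} [NormedAddCommGroup X] [NormedAddCommGroup Y] {G : X → Set Y} {x : X}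

theorem eventually_nonempty (hG : LipschitzAround G x) (hx : (G x).Nonempty) :
    ∀ᶠ x' in 𝓝 x, (G x').Nonempty := by
  obtain ⟨c, -, δ, hδ, hG⟩ := hG
  obtain ⟨y, hy⟩ := hx
  filter_upwards [ball_mem_nhds x hδ] with x' hx'
  obtain ⟨z, hz, -⟩ := hG x x' (by simpa using hδ) (mem_ball_iff_norm.mp hx') hy
  exact ⟨z, hz⟩

theorem exists_infDist_le_mul_infDist_graph (hG : LipschitzAround G x) {y : Y} (hy : y ∈ G x) :
    ∃ C, ∀ᶠ p in 𝓝 (x, y),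
      infDist p.2 (G p.1) ≤ C * infDist p {q : X × Y | q.2 ∈ G q.1} := by
  obtain ⟨c, hc, δ, hδ, hG⟩ := hG
  set K := {q : X × Y | q.2 ∈ G q.1}
  refine ⟨1 + c, ?_⟩
  have hfst : ∀ᶠ p in 𝓝 (x, y), p.1 ∈ ball x (δ / 2) :=
    continuous_fst.continuousAt.preimage_mem_nhds (ball_mem_nhds x (half_pos hδ))
  have hdist : ∀ᶠ p in 𝓝 (x, y), infDist p K < δ / 2 :=
    (continuous_infDist_pt K).continuousAt.eventually_lt continuousAt_const
      (by rw [infDist_zero_of_mem (show (x, y) ∈ K from hy)]; exact half_pos hδ)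
  filter_upwards [hfst, hdist] with p hp hpK
  refine le_mul_infDist_of_forall_dist_lt ⟨(x, y), hy⟩ (by positivity) hpK fun q hq hpq => ?_
  have hpq₁ : dist p.1 q.1 ≤ dist p q := by rw [Prod.dist_eq]; exact le_max_left _ _
  have hpq₂ : dist p.2 q.2 ≤ dist p q := by rw [Prod.dist_eq]; exact le_max_right _ _
  have hq₁ : ‖q.1 - x‖ < δ := by
    rw [← dist_eq_norm]
    linarith [dist_triangle q.1 p.1 x, dist_comm p.1 q.1, mem_ball.mp hp]
  obtain ⟨z, hz, u, hu, hzu⟩ := hG q.1 p.1 hq₁ (mem_ball_iff_norm.mp (ball_subset_ball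
    (half_le_self hδ.le) hp)) hq
  have hu' : ‖u‖ ≤ c * dist p q := by
    refine hu.trans (mul_le_mul_of_nonneg_left ?_ hc)
    rw [← dist_eq_norm, dist_comm]; exact hpq₁
  have hqz : dist q.2 z = ‖u‖ := by rw [← hzu]; exact dist_self_add_left u z
  calc infDist p.2 (G p.1) ≤ dist p.2 z := infDist_le_dist_of_mem hz
    _ ≤ dist p.2 q.2 + dist q.2 z := dist_triangle _ _ _
    _ ≤ dist p q + c * dist p q := by rw [hqz]; exact add_le_add hpq₂ hu'
    _ = (1 + c) * dist p q := by ring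

variable [NormedSpace ℝ X] [NormedSpace ℝ Y]

theorem mem_adjacentDeriv_iff (hG : LipschitzAround G x) {y : Y} (hy : y ∈ G x) {v : X} {w : Y} :
    w ∈ adjacentDeriv G x y v ↔
      Tendsto (fun ε : ℝ => infDist (y + ε • w) (G (x + ε • v)) / ε) (𝓝[>] 0) (𝓝 0) := by
  obtain ⟨C, hC⟩ := hG.exists_infDist_le_mul_infDist_graph hy
  have hpath : Tendsto (fun ε : ℝ => (x + ε • v, y + ε • w)) (𝓝[>] 0) (𝓝 (x, y)) :=
    (Continuous.tendsto' (by fun_prop) 0 _ (by simp)).mono_left nhdsWithin_le_nhds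
  have hne : ∀ᶠ ε in 𝓝[>] (0 : ℝ), (G (x + ε • v)).Nonempty :=
    hpath.eventually (continuous_fst.continuousAt.eventually (hG.eventually_nonempty ⟨y, hy⟩))
  constructor
  · exact tendsto_div_zero_of_eventually_le_mul C (Eventually.of_forall fun _ => infDist_nonneg)
      (hpath.eventually hC)
  · refine tendsto_div_zero_of_eventually_le_mul 1 (Eventually.of_forall fun _ => infDist_nonneg) ?_
    filter_upwards [hne] with ε hε
    rw [one_mul]
    exact infDist_graph_le_infDist _ hε

end LipschitzAround

theorem convex_adjacentDeriv_general
    {X Y : Type*} [NormedAddCommGroup X] [NormedSpace ℝ X]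
    [NormedAddCommGroup Y] [NormedSpace ℝ Y]
    (G : X → Set Y) (x : X) (y : Y)
    (hconv : ∀ x' : X, Convex ℝ (G x'))
    (hlip : LipschitzAround G x) (hy : y ∈ G x) :
    ∀ v : X, Convex ℝ (adjacentDeriv G x y v) := by
  intro v w₁ hw₁ w₂ hw₂ a b ha hb hab
  rw [hlip.mem_adjacentDeriv_iff hy] at hw₁ hw₂ ⊢
  have hcombo : ∀ ε : ℝ, y + ε • (a • w₁ + b • w₂) = a • (y + ε • w₁) + b • (y + ε • w₂) := by
    intro ε
    linear_combination (norm := module) -hab • y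
  have hlim := (hw₁.const_mul a).add (hw₂.const_mul b)
  rw [mul_zero, mul_zero, add_zero] at hlim
  refine squeeze_zero' ?_ ?_ hlim
  · filter_upwards [self_mem_nhdsWithin] with ε hε using div_nonneg infDist_nonneg (le_of_lt hε)
  · filter_upwards [self_mem_nhdsWithin] with ε hε
    rw [hcombo, mul_div_assoc', mul_div_assoc', ← add_div]
    exact div_le_div_of_nonneg_right
      ((hconv _).convexOn_infDist_s2.2 trivial trivial ha hb hab) (le_of_lt hε)

theorem convex_adjacentDeriv
    {X Y : Type*} [NormedAddCommGroup X] [NormedSpace ℝ X]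
    [NormedAddCommGroup Y] [NormedSpace ℝ Y]
    (G : X → Set Y) (x : X) (y : Y)
    (hne : ∀ x' : X, (G x').Nonempty) (hconv : ∀ x' : X, Convex ℝ (G x'))
    (hlip : LipschitzAround G x) (hy : y ∈ G x) :
    ∀ v : X, Convex ℝ (adjacentDeriv G x y v) :=
  convex_adjacentDeriv_general G x y hconv hlip hy
end

section
/- Let X and Y be real normed spaces, let G be a set-valued map from X to Y with nonempty values which is Lipschitz around a point x, and let y ∈ G(x). Then for every v ∈ X and w ∈ Y, one has w ∈ D♭G(x,y)(v) if and only if lim_{ε→0⁺} dist(w, (G(x+εv) − y)/ε) = 0; that is, D♭G(x,y)(v) equals the Peano–Kuratowski lower limit of the sets (G(x+εv) − y)/ε as ε → 0⁺. -/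
open Filter Topology Metric Pointwise

theorem adjacentDeriv_eq_liminf
    {X Y : Type*} [NormedAddCommGroup X] [NormedSpace ℝ X]
    [NormedAddCommGroup Y] [NormedSpace ℝ Y]
    (G : X → Set Y) (x : X) (y : Y)
    (hne : ∀ x' : X, (G x').Nonempty)
    (hlip : LipschitzAround G x) (hy : y ∈ G x) :
    ∀ (v : X) (w : Y), w ∈ adjacentDeriv G x y v ↔
      Tendsto (fun ε : ℝ => infDist w ((fun z => ε⁻¹ • (z - y)) '' G (x + ε • v)))
        (𝓝[>] (0 : ℝ)) (𝓝 0) := by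
  obtain ⟨c, hc, δ, hδ, hL⟩ := hlip
  intro v w
  have hgraph : ({p : X × Y | p.2 ∈ G p.1} : Set (X × Y)).Nonempty := ⟨(x, y), hy⟩
  have key : ∀ ε : ℝ, 0 < ε → ∀ z : Y,
      ‖w - ε⁻¹ • (z - y)‖ = ε⁻¹ * ‖y + ε • w - z‖ := by
    intro ε hε z
    have h1 : y + ε • w - z = ε • (w - ε⁻¹ • (z - y)) := by
      rw [smul_sub, smul_inv_smul₀ hε.ne']
      abel
    rw [h1, norm_smul, Real.norm_eq_abs, abs_of_pos hε]
    field_simp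
  simp only [adjacentDeriv, adjacentCone, Set.mem_setOf_eq, Prod.smul_mk, Prod.mk_add_mk]
  constructor
  · intro h
    have hfnn : ∀ ε : ℝ, 0 < ε →
        0 ≤ infDist (x + ε • v, y + ε • w) {p : X × Y | p.2 ∈ G p.1} / ε :=
      fun ε hε => div_nonneg infDist_nonneg hε.le
    apply squeeze_zero' (g := fun ε : ℝ =>
      (1 + c) * (infDist (x + ε • v, y + ε • w) {p : X × Y | p.2 ∈ G p.1} / ε + ε))
    · filter_upwards [self_mem_nhdsWithin] with ε _
      exact infDist_nonneg
    · have hδ' : (0 : ℝ) < δ / (‖v‖ + 2) := div_pos hδ (by positivity)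
      have hsmall : ∀ᶠ ε in 𝓝[>] (0 : ℝ), ε < min 1 (δ / (‖v‖ + 2)) :=
        Filter.Eventually.filter_mono nhdsWithin_le_nhds
          (eventually_lt_nhds (lt_min one_pos hδ'))
      filter_upwards [self_mem_nhdsWithin, h.eventually_lt_const one_pos, hsmall]
        with ε hε hfε hεs
      have hε0 : (0 : ℝ) < ε := hε
      set d := infDist (x + ε • v, y + ε • w) {p : X × Y | p.2 ∈ G p.1} with hd
      have hε1 : ε < 1 := lt_of_lt_of_le hεs (min_le_left _ _)
      have hεδ : ε * (‖v‖ + 2) < δ := by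
        have h2 := lt_of_lt_of_le hεs (min_le_right _ _)
        calc ε * (‖v‖ + 2) < (δ / (‖v‖ + 2)) * (‖v‖ + 2) := by
              exact mul_lt_mul_of_pos_right h2 (by positivity)
          _ = δ := div_mul_cancel₀ _ (by positivity)
      have hdr : d < (d / ε + ε) * ε := by
        rw [← div_lt_iff₀ hε0]
        exact lt_add_of_pos_right _ hε0
      obtain ⟨p, hp, hpd⟩ := (infDist_lt_iff hgraph).mp hdr
      obtain ⟨h1, h2⟩ := max_lt_iff.mp (by rwa [Prod.dist_eq] at hpd)
      have hr0 : 0 < (d / ε + ε) * ε := lt_of_le_of_lt dist_nonneg h1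
      have hdfe : d / ε < 1 := hfε
      have hre : (d / ε + ε) * ε < 2 * ε := by nlinarith
      have hx1 : ‖p.1 - x‖ < δ := by
        have e1 : p.1 - x = (p.1 - (x + ε • v)) + ε • v := by abel
        have e2 : ‖p.1 - (x + ε • v)‖ < (d / ε + ε) * ε := by
          rw [← dist_eq_norm]; rwa [dist_comm] at h1
        calc ‖p.1 - x‖ ≤ ‖p.1 - (x + ε • v)‖ + ‖ε • v‖ := by rw [e1]; exact norm_add_le _ _
          _ = ‖p.1 - (x + ε • v)‖ + ε * ‖v‖ := by
              rw [norm_smul, Real.norm_eq_abs, abs_of_pos hε0]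
          _ < δ := by nlinarith
      have hx2 : ‖(x + ε • v) - x‖ < δ := by
        have e1 : (x + ε • v) - x = ε • v := by abel
        rw [e1, norm_smul, Real.norm_eq_abs, abs_of_pos hε0]
        nlinarith [norm_nonneg v]
      have hmem := hL p.1 (x + ε • v) hx1 hx2 hp
      rw [Set.mem_add] at hmem
      obtain ⟨z, hz, u, hu, hzu⟩ := hmem
      have hu' : ‖u‖ ≤ c * ((d / ε + ε) * ε) := by
        refine le_trans hu ?_
        have : ‖p.1 - (x + ε • v)‖ ≤ (d / ε + ε) * ε := by
          rw [← dist_eq_norm, dist_comm]; exact h1.le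
        exact mul_le_mul_of_nonneg_left this hc
      have hnz : ‖y + ε • w - z‖ ≤ (1 + c) * ((d / ε + ε) * ε) := by
        have e1 : y + ε • w - z = (y + ε • w - p.2) + u := by
          rw [← hzu]; abel
        have e2 : ‖y + ε • w - p.2‖ < (d / ε + ε) * ε := by
          rw [← dist_eq_norm]; exact h2
        calc ‖y + ε • w - z‖ ≤ ‖y + ε • w - p.2‖ + ‖u‖ := by rw [e1]; exact norm_add_le _ _
          _ ≤ (1 + c) * ((d / ε + ε) * ε) := by nlinarith
      calc infDist w ((fun z => ε⁻¹ • (z - y)) '' G (x + ε • v))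
          ≤ dist w (ε⁻¹ • (z - y)) := infDist_le_dist_of_mem ⟨z, hz, rfl⟩
        _ = ε⁻¹ * ‖y + ε • w - z‖ := by rw [dist_eq_norm, key ε hε0 z]
        _ ≤ ε⁻¹ * ((1 + c) * ((d / ε + ε) * ε)) := by
            exact mul_le_mul_of_nonneg_left hnz (by positivity)
        _ = (1 + c) * (d / ε + ε) := by field_simp
    · have h2 : Tendsto (fun ε : ℝ =>
          infDist (x + ε • v, y + ε • w) {p : X × Y | p.2 ∈ G p.1} / ε + ε)
          (𝓝[>] (0 : ℝ)) (𝓝 (0 + 0)) :=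
        h.add (tendsto_id.mono_left nhdsWithin_le_nhds)
      simpa using h2.const_mul (1 + c)
  · intro h
    apply squeeze_zero' (g := fun ε : ℝ =>
      infDist w ((fun z => ε⁻¹ • (z - y)) '' G (x + ε • v)) + ε)
    · filter_upwards [self_mem_nhdsWithin] with ε hε
      exact div_nonneg infDist_nonneg (le_of_lt hε)
    · filter_upwards [self_mem_nhdsWithin] with ε hε
      have hε0 : (0 : ℝ) < ε := hε
      set t := infDist w ((fun z => ε⁻¹ • (z - y)) '' G (x + ε • v)) with ht
      have hne' : ((fun z => ε⁻¹ • (z - y)) '' G (x + ε • v)).Nonempty :=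
        (hne _).image _
      have htlt : t < t + ε := lt_add_of_pos_right _ hε0
      obtain ⟨zw, hzw, hdzw⟩ := (infDist_lt_iff hne').mp htlt
      obtain ⟨z, hz, rfl⟩ := hzw
      have hmem : (x + ε • v, z) ∈ {p : X × Y | p.2 ∈ G p.1} := hz
      have hle : infDist (x + ε • v, y + ε • w) {p : X × Y | p.2 ∈ G p.1}
          ≤ dist (x + ε • v, y + ε • w) ((x + ε • v, z) : X × Y) :=
        infDist_le_dist_of_mem hmem
      have hdeq : dist (x + ε • v, y + ε • w) ((x + ε • v, z) : X × Y)
          = ε * ‖w - ε⁻¹ • (z - y)‖ := by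
        rw [Prod.dist_eq]
        simp only [dist_self]
        rw [max_eq_right dist_nonneg, dist_eq_norm, key ε hε0 z]
        field_simp
      have hdzw' : ‖w - ε⁻¹ • (z - y)‖ < t + ε := by
        rw [← dist_eq_norm]; exact hdzw
      rw [div_le_iff₀ hε0]
      calc infDist (x + ε • v, y + ε • w) {p : X × Y | p.2 ∈ G p.1}
          ≤ ε * ‖w - ε⁻¹ • (z - y)‖ := by rw [← hdeq]; exact hle
        _ ≤ (t + ε) * ε := by nlinarith
    · have h2 : Tendsto (fun ε : ℝ =>
          infDist w ((fun z => ε⁻¹ • (z - y)) '' G (x + ε • v)) + ε)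
          (𝓝[>] (0 : ℝ)) (𝓝 (0 + 0)) :=
        h.add (tendsto_id.mono_left nhdsWithin_le_nhds)
      simpa using h2
end

section
/- Let X and Z be real normed spaces, let F be a set-valued map from X to Z with nonempty convex values which is Lipschitz around x̄, and let φ : X → Z be Fréchet differentiable at x̄ with φ(x) ∈ F(x) for all x in a neighborhood of x̄. Then for every v ∈ X and every w ∈ F(x̄), one has Dφ(x̄)v + w − φ(x̄) ∈ D♭F(x̄, φ(x̄))(v). -/
open Filter Topology Metric Pointwise

theorem fderiv_add_mem_adjacentDeriv
    {X Z : Type*} [NormedAddCommGroup X] [NormedSpace ℝ X]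
    [NormedAddCommGroup Z] [NormedSpace ℝ Z]
    (F : X → Set Z) (xb : X)
    (hne : ∀ x : X, (F x).Nonempty) (hconv : ∀ x : X, Convex ℝ (F x))
    (hlip : LipschitzAround F xb)
    (φ : X → Z) (Dφ : X →L[ℝ] Z)
    (hdiff : HasFDerivAt φ Dφ xb) (hmem : ∀ᶠ x in 𝓝 xb, φ x ∈ F x) :
    ∀ v : X, ∀ w ∈ F xb, Dφ v + w - φ xb ∈ adjacentDeriv F xb (φ xb) v := by
  obtain ⟨c, hc, δ, hδ, hLip⟩ := hlip
  intro v w hw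
  set K : Set (X × Z) := {p : X × Z | p.2 ∈ F p.1} with hK
  set r : ℝ → Z := fun ε => φ (xb + ε • v) - φ xb - Dφ (ε • v) with hrdef
  -- the curve ε ↦ xb + ε • v tends to xb
  have hcurve : Tendsto (fun ε : ℝ => xb + ε • v) (𝓝[>] (0 : ℝ)) (𝓝 xb) := by
    have : Tendsto (fun ε : ℝ => xb + ε • v) (𝓝 (0 : ℝ)) (𝓝 xb) := by
      have := (tendsto_id (x := 𝓝 (0:ℝ))).smul (tendsto_const_nhds (x := v))
      simpa using (tendsto_const_nhds (x := xb)).add this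
    exact this.mono_left nhdsWithin_le_nhds
  -- the little-o remainder term
  have hr : Tendsto (fun ε : ℝ => ‖r ε‖ / ε) (𝓝[>] (0 : ℝ)) (𝓝 0) := by
    have h1 : (fun x => φ x - φ xb - Dφ (x - xb)) =o[𝓝 xb] fun x => x - xb :=
      hdiff.isLittleO
    have h2 : (fun ε : ℝ => φ (xb + ε • v) - φ xb - Dφ ((xb + ε • v) - xb))
        =o[𝓝[>] (0:ℝ)] fun ε : ℝ => (xb + ε • v) - xb := h1.comp_tendsto hcurve
    have h3 : (fun ε : ℝ => r ε) =o[𝓝[>] (0:ℝ)] fun ε : ℝ => ε • v := by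
      simpa [hrdef, add_sub_cancel_left] using h2
    have h4 : (fun ε : ℝ => ε • v) =O[𝓝[>] (0:ℝ)] fun ε : ℝ => ε := by
      apply Asymptotics.isBigO_of_le' (c := ‖v‖)
      intro ε
      rw [norm_smul]
      exact le_of_eq (mul_comm _ _)
    have h5 : (fun ε : ℝ => ‖r ε‖) =o[𝓝[>] (0:ℝ)] fun ε : ℝ => ε :=
      (h3.trans_isBigO h4).norm_left
    exact h5.tendsto_div_nhds_zero
  -- eventual facts
  have hsmall : ∀ᶠ ε in 𝓝[>] (0:ℝ), ‖(xb + ε • v) - xb‖ < δ := by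
    have : Tendsto (fun ε : ℝ => ‖(xb + ε • v) - xb‖) (𝓝[>] (0:ℝ)) (𝓝 0) := by
      have := (hcurve.sub (tendsto_const_nhds (x := xb))).norm
      simpa using this
    exact this.eventually (eventually_lt_nhds hδ)
  have hlt1 : ∀ᶠ ε in 𝓝[>] (0:ℝ), ε < 1 := by
    have : ∀ᶠ ε in 𝓝 (0:ℝ), ε < 1 := eventually_lt_nhds one_pos
    exact this.filter_mono nhdsWithin_le_nhds
  have hpos : ∀ᶠ ε in 𝓝[>] (0:ℝ), 0 < ε := self_mem_nhdsWithin
  have hφmem : ∀ᶠ ε in 𝓝[>] (0:ℝ), φ (xb + ε • v) ∈ F (xb + ε • v) :=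
    hcurve.eventually hmem
  -- the key upper bound
  have key : ∀ᶠ ε in 𝓝[>] (0:ℝ),
      infDist ((xb, φ xb) + ε • (v, Dφ v + w - φ xb)) K / ε
        ≤ ‖r ε‖ / ε + ε * (‖Dφ v‖ + c * ‖v‖) := by
    filter_upwards [hsmall, hlt1, hpos, hφmem] with ε hεδ hε1 hε0 hεφ
    -- pick w' ∈ F (xb + ε • v) close to w
    have hsub := hLip xb (xb + ε • v) (by simpa using hδ) hεδ
    obtain ⟨w', hw', u, hu, huw⟩ := Set.mem_add.1 (hsub hw)
    simp only [Set.mem_setOf_eq] at hu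
    have hxnorm : ‖xb - (xb + ε • v)‖ = ε * ‖v‖ := by
      rw [show xb - (xb + ε • v) = -(ε • v) by abel, norm_neg, norm_smul,
        Real.norm_eq_abs, abs_of_pos hε0]
    rw [hxnorm] at hu
    -- the comparison point in the graph
    set p : X × Z := (xb + ε • v, (1 - ε) • φ (xb + ε • v) + ε • w') with hp
    have hpK : p ∈ K := by
      exact hconv _ hεφ hw' (by linarith) (le_of_lt hε0) (by ring)
    set q : X × Z := (xb, φ xb) + ε • (v, Dφ v + w - φ xb) with hq
    have hq1 : q.1 = xb + ε • v := rfl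
    have hq2 : q.2 = φ xb + ε • (Dφ v + w - φ xb) := rfl
    have hdist : infDist q K ≤ ‖p.2 - q.2‖ := by
      refine le_trans (infDist_le_dist_of_mem hpK) ?_
      rw [Prod.dist_eq]
      have : dist q.1 p.1 = 0 := by simp [hq1, hp]
      rw [this, dist_eq_norm]
      simp [max_le_iff, norm_sub_rev q.2 p.2]
    have hdiffeq : p.2 - q.2 = (1 - ε) • r ε - (ε * ε) • Dφ v - ε • u := by
      have hDs : Dφ (ε • v) = ε • Dφ v := Dφ.map_smul ε v
      have hww : w = w' + u := huw.symm
      rw [hq2, hrdef]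
      simp only [hp, hww, hDs]
      module
    have hnorm : ‖p.2 - q.2‖ ≤ ‖r ε‖ + ε * ε * ‖Dφ v‖ + ε * (c * (ε * ‖v‖)) := by
      rw [hdiffeq]
      refine le_trans (norm_sub_le _ _) ?_
      gcongr
      refine le_trans (norm_sub_le _ _) ?_
      gcongr
      · rw [norm_smul, Real.norm_eq_abs, abs_of_nonneg (by linarith)]
        nlinarith [norm_nonneg (r ε)]
      · rw [norm_smul, Real.norm_eq_abs, abs_of_nonneg (by positivity)]
      · rw [norm_smul, Real.norm_eq_abs, abs_of_pos hε0]
        exact mul_le_mul_of_nonneg_left hu (le_of_lt hε0)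
    have hfinal : infDist q K ≤ ‖r ε‖ + ε * ε * ‖Dφ v‖ + ε * (c * (ε * ‖v‖)) :=
      le_trans hdist hnorm
    rw [div_le_iff₀ hε0] at *
    calc infDist q K ≤ ‖r ε‖ + ε * ε * ‖Dφ v‖ + ε * (c * (ε * ‖v‖)) := hfinal
      _ ≤ (‖r ε‖ / ε + ε * (‖Dφ v‖ + c * ‖v‖)) * ε := by
          field_simp
          ring_nf
          nlinarith [norm_nonneg (r ε)]
  -- squeeze
  have hub : Tendsto (fun ε : ℝ => ‖r ε‖ / ε + ε * (‖Dφ v‖ + c * ‖v‖))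
      (𝓝[>] (0:ℝ)) (𝓝 0) := by
    have h2 : Tendsto (fun ε : ℝ => ε * (‖Dφ v‖ + c * ‖v‖)) (𝓝[>] (0:ℝ)) (𝓝 0) := by
      have := (tendsto_id (x := 𝓝 (0:ℝ))).mul_const (‖Dφ v‖ + c * ‖v‖)
      simpa using this.mono_left nhdsWithin_le_nhds
    simpa using hr.add h2
  have hlb : ∀ᶠ ε in 𝓝[>] (0:ℝ),
      0 ≤ infDist ((xb, φ xb) + ε • (v, Dφ v + w - φ xb)) K / ε := by
    filter_upwards [hpos] with ε hε0
    exact div_nonneg infDist_nonneg (le_of_lt hε0)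
  exact tendsto_of_tendsto_of_tendsto_of_le_of_le' tendsto_const_nhds hub hlb key
end

section
/- Let H̃, H, K be real normed spaces, let U be a nonempty convex compact subset of H̃, let a : H̃ → H and b : H̃ → K be continuous affine maps, and let f : H̃ → ℝ be continuous and convex. Then the set F := {(a(u), b(u), f(u) + r) : u ∈ U, r ≥ 0} is a closed convex subset of H × K × ℝ. -/
theorem isClosed_and_convex_augmented_image
    {Ht H K : Type*} [NormedAddCommGroup Ht] [NormedSpace ℝ Ht]
    [NormedAddCommGroup H] [NormedSpace ℝ H]
    [NormedAddCommGroup K] [NormedSpace ℝ K]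
    (U : Set Ht) (hUne : U.Nonempty) (hUconv : Convex ℝ U) (hUcpt : IsCompact U)
    (a : Ht →ᵃ[ℝ] H) (ha : Continuous a)
    (b : Ht →ᵃ[ℝ] K) (hb : Continuous b)
    (f : Ht → ℝ) (hfcont : Continuous f) (hfconv : ConvexOn ℝ Set.univ f) :
    IsClosed {p : H × K × ℝ | ∃ u ∈ U, ∃ r : ℝ, 0 ≤ r ∧ p = (a u, b u, f u + r)} ∧
      Convex ℝ {p : H × K × ℝ | ∃ u ∈ U, ∃ r : ℝ, 0 ≤ r ∧ p = (a u, b u, f u + r)} := by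
  constructor
  · apply IsSeqClosed.isClosed
    intro p q hp hq
    choose u hu r hr hpr using hp
    obtain ⟨v, hv, φ, hφ, hconv⟩ := hUcpt.tendsto_subseq hu
    have hpφ : Filter.Tendsto (fun n => p (φ n)) Filter.atTop (nhds q) :=
      hq.comp hφ.tendsto_atTop
    have h1 : Filter.Tendsto (fun n => (p (φ n)).1) Filter.atTop (nhds q.1) :=
      (continuous_fst.tendsto q).comp hpφ
    have h2 : Filter.Tendsto (fun n => (p (φ n)).2.1) Filter.atTop (nhds q.2.1) :=
      (continuous_fst.tendsto q.2).comp ((continuous_snd.tendsto q).comp hpφ)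
    have h3 : Filter.Tendsto (fun n => (p (φ n)).2.2) Filter.atTop (nhds q.2.2) :=
      (continuous_snd.tendsto q.2).comp ((continuous_snd.tendsto q).comp hpφ)
    have ha' : Filter.Tendsto (fun n => a (u (φ n))) Filter.atTop (nhds (a v)) :=
      (ha.tendsto v).comp hconv
    have hb' : Filter.Tendsto (fun n => b (u (φ n))) Filter.atTop (nhds (b v)) :=
      (hb.tendsto v).comp hconv
    have hf' : Filter.Tendsto (fun n => f (u (φ n))) Filter.atTop (nhds (f v)) :=
      (hfcont.tendsto v).comp hconv
    have e1 : (fun n => (p (φ n)).1) = fun n => a (u (φ n)) := by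
      funext n; rw [hpr (φ n)]
    have e2 : (fun n => (p (φ n)).2.1) = fun n => b (u (φ n)) := by
      funext n; rw [hpr (φ n)]
    have e3 : (fun n => (p (φ n)).2.2) = fun n => f (u (φ n)) + r (φ n) := by
      funext n; rw [hpr (φ n)]
    rw [e1] at h1; rw [e2] at h2; rw [e3] at h3
    have hq1 : q.1 = a v := tendsto_nhds_unique h1 ha'
    have hq2 : q.2.1 = b v := tendsto_nhds_unique h2 hb'
    have hrlim : Filter.Tendsto (fun n => r (φ n)) Filter.atTop (nhds (q.2.2 - f v)) := by
      have := h3.sub hf'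
      simpa using this
    have hrnn : 0 ≤ q.2.2 - f v :=
      le_of_tendsto_of_tendsto' tendsto_const_nhds hrlim (fun n => hr (φ n))
    exact ⟨v, hv, q.2.2 - f v, hrnn, by
      rw [show q = (q.1, q.2.1, q.2.2) from rfl, hq1, hq2]
      simp⟩
  · rintro p ⟨u₁, hu₁, r₁, hr₁, rfl⟩ q ⟨u₂, hu₂, r₂, hr₂, rfl⟩ s t hs ht hst
    refine ⟨s • u₁ + t • u₂, hUconv hu₁ hu₂ hs ht hst,
      s * (f u₁ + r₁) + t * (f u₂ + r₂) - f (s • u₁ + t • u₂), ?_, ?_⟩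
    · have := hfconv.2 (Set.mem_univ u₁) (Set.mem_univ u₂) hs ht hst
      simp only [smul_eq_mul] at this
      nlinarith [mul_nonneg hs hr₁, mul_nonneg ht hr₂]
    · have ea := Convex.combo_affine_apply (f := a) (x := u₁) (y := u₂) hst
      have eb := Convex.combo_affine_apply (f := b) (x := u₁) (y := u₂) hst
      simp only [Prod.smul_mk, Prod.mk_add_mk, smul_eq_mul, ea, eb, Prod.mk.injEq]
      refine ⟨trivial, trivial, by ring⟩
end

section
/- Let H and K be real Hilbert spaces, U a nonempty set, a : U → H, b : U → K, f : U → ℝ, and ū ∈ U. Assume the set F := {(a(u), b(u), f(u) + r) : u ∈ U, r ≥ 0} ⊆ H × K × ℝ is convex. Let P₁ ∈ H, Q₁ ∈ K and let P₂ : K → K be a bounded linear operator, and suppose that for every u ∈ U: ⟨P₁, a(u) − a(ū)⟩_H + ⟨Q₁, b(u) − b(ū)⟩_K − (f(u) − f(ū)) + ½⟨P₂(b(u) − b(ū)), b(u) − b(ū)⟩_K ≤ 0. Then for every u ∈ U: ⟨P₁, a(u) − a(ū)⟩_H + ⟨Q₁, b(u) − b(ū)⟩_K − (f(u) − f(ū))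 ≤ 0. -/
open scoped RealInnerProductSpace

theorem second_order_maximality_implies_first_order
    {α H K : Type*} [NormedAddCommGroup H] [InnerProductSpace ℝ H] [CompleteSpace H]
    [NormedAddCommGroup K] [InnerProductSpace ℝ K] [CompleteSpace K]
    (U : Set α) (hU : U.Nonempty)
    (a : α → H) (b : α → K) (f : α → ℝ) (ubar : α) (hubar : ubar ∈ U)
    (hFconv : Convex ℝ {p : H × K × ℝ | ∃ u ∈ U, ∃ r : ℝ, 0 ≤ r ∧ p = (a u, b u, f u + r)})
    (P₁ : H) (Q₁ : K) (P₂ : K →L[ℝ] K)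
    (hmax : ∀ u ∈ U,
      ⟪P₁, a u - a ubar⟫ + ⟪Q₁, b u - b ubar⟫ - (f u - f ubar)
        + (1 / 2) * ⟪P₂ (b u - b ubar), b u - b ubar⟫ ≤ 0) :
    ∀ u ∈ U, ⟪P₁, a u - a ubar⟫ + ⟪Q₁, b u - b ubar⟫ - (f u - f ubar) ≤ 0 := by
  intro u hu
  set L : ℝ := ⟪P₁, a u - a ubar⟫ + ⟪Q₁, b u - b ubar⟫ - (f u - f ubar) with hL
  set C : ℝ := (1 / 2) * ⟪P₂ (b u - b ubar), b u - b ubar⟫ with hC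
  have key : ∀ t : ℝ, 0 < t → t ≤ 1 → L + t * C ≤ 0 := by
    intro t ht ht1
    have hmem : t • ((a u, b u, f u + 0) : H × K × ℝ)
        + (1 - t) • ((a ubar, b ubar, f ubar + 0) : H × K × ℝ)
        ∈ {p : H × K × ℝ | ∃ u ∈ U, ∃ r : ℝ, 0 ≤ r ∧ p = (a u, b u, f u + r)} :=
      hFconv ⟨u, hu, 0, le_refl 0, rfl⟩ ⟨ubar, hubar, 0, le_refl 0, rfl⟩
        ht.le (by linarith) (by ring)
    obtain ⟨u', hu', r, hr, hp⟩ := hmem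
    have ha : a u' = t • a u + (1 - t) • a ubar := by
      have := congrArg Prod.fst hp; simpa using this.symm
    have hb : b u' = t • b u + (1 - t) • b ubar := by
      have := congrArg (fun p : H × K × ℝ => p.2.1) hp; simpa using this.symm
    have hf : f u' + r = t * (f u + 0) + (1 - t) * (f ubar + 0) := by
      have := congrArg (fun p : H × K × ℝ => p.2.2) hp; simpa using this.symm
    have hΔa : a u' - a ubar = t • (a u - a ubar) := by rw [ha]; module
    have hΔb : b u' - b ubar = t • (b u - b ubar) := by rw [hb]; module
    have hΔf : f u' - f ubar = t * (f u - f ubar) - r := by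
      have : f u' = t * f u + (1 - t) * f ubar - r := by linarith
      rw [this]; ring
    have h := hmax u' hu'
    rw [hΔa, hΔb, hΔf, real_inner_smul_right, real_inner_smul_right, map_smul,
      real_inner_smul_left, real_inner_smul_right] at h
    have h' : t * L + t * t * C + r ≤ 0 := by
      rw [hL, hC]; nlinarith [h]
    have h'' : t * (L + t * C) ≤ 0 := by nlinarith
    nlinarith [mul_le_mul_of_nonneg_left h'' (le_of_lt (inv_pos.mpr ht)),
      mul_pos ht ht]
  -- take t = 1/(n+1) and pass to the limit
  have hseq : ∀ n : ℕ, L + (1 / (n + 1 : ℝ)) * C ≤ 0 := by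
    intro n
    have h1 : (0 : ℝ) < 1 / (n + 1) := by positivity
    have h2 : (1 : ℝ) / (n + 1) ≤ 1 := by
      rw [div_le_one (by positivity)]; linarith [Nat.cast_nonneg (α := ℝ) n]
    exact key _ h1 h2
  have htend : Filter.Tendsto (fun n : ℕ => L + (1 / (n + 1 : ℝ)) * C)
      Filter.atTop (nhds (L + 0 * C)) :=
    Filter.Tendsto.add tendsto_const_nhds
      (tendsto_one_div_add_atTop_nhds_zero_nat.mul tendsto_const_nhds)
  have := le_of_tendsto' htend hseq
  simpa using this
end

section
/- Let X be a real normed space, 𝒰 ⊆ X a nonempty set, and J : X → ℝ be Fréchet differentiable at a point ū ∈ 𝒰. Suppose ū is a local minimizer of J over 𝒰, i.e., there exists δ > 0 such that J(ū) ≤ J(u) for every u ∈ 𝒰 with ‖u − ū‖ < δ. Then DJ(ū)(v) ≥ 0 for every v ∈ T_𝒰(ū), where DJ(ū) denotes the Fréchet derivative of J at ū. -/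
open Filter Topology Metric

/-! The adjacent cone sits inside Mathlib's `posTangentConeAt`, so the theorem is Fermat's rule
`IsLocalMinOn.hasFDerivWithinAt_nonneg`. For the inclusion, pick `y t ∈ K` within
`infDist (x + t • v) K + t²` of `x + t • v`; then `t⁻¹ • (y t - x) → v` as `t → 0⁺`. -/

section

variable {X : Type*} [NormedAddCommGroup X] [NormedSpace ℝ X]

theorem exists_tendsto_add_smul_mem_of_mem_adjacentCone {K : Set X} {x v : X}
    (hK : K.Nonempty) (hv : v ∈ adjacentCone K x) :
    ∃ w : ℝ → X, Tendsto w (𝓝[>] 0) (𝓝 v) ∧ ∀ᶠ t in 𝓝[>] 0, x + t • w t ∈ K := by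
  have hnear : ∀ t : ℝ, 0 < t → ∃ y ∈ K, dist (x + t • v) y < infDist (x + t • v) K + t ^ 2 :=
    fun t ht => (infDist_lt_iff hK).1 (lt_add_of_pos_right _ (pow_pos ht 2))
  choose! y hyK hy using hnear
  refine ⟨fun t => t⁻¹ • (y t - x), ?_, ?_⟩
  · have hbound : Tendsto (fun t : ℝ => infDist (x + t • v) K / t + t) (𝓝[>] 0) (𝓝 0) := by
      simpa using hv.add (tendsto_id.mono_left nhdsWithin_le_nhds)
    refine tendsto_iff_dist_tendsto_zero.2
      (squeeze_zero' (Eventually.of_forall fun _ => dist_nonneg) ?_ hbound)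
    filter_upwards [self_mem_nhdsWithin] with t (ht : 0 < t)
    calc dist (t⁻¹ • (y t - x)) v = dist (x + t • v) (y t) / t := by
          rw [dist_eq_norm, dist_eq_norm', div_eq_inv_mul,
            ← norm_smul_of_nonneg (inv_nonneg.2 ht.le)]
          congr 1
          rw [smul_sub t⁻¹ (y t) (x + t • v), smul_add, smul_smul, inv_mul_cancel₀ ht.ne',
            one_smul, smul_sub]
          abel
      _ ≤ (infDist (x + t • v) K + t ^ 2) / t := by gcongr; exact (hy t ht).le
      _ = infDist (x + t • v) K / t + t := by field_simp
  · filter_upwards [self_mem_nhdsWithin] with t (ht : 0 < t)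
    simpa [smul_smul, ht.ne'] using hyK t ht

theorem adjacentCone_subset_posTangentConeAt {K : Set X} (hK : K.Nonempty) (x : X) :
    adjacentCone K x ⊆ posTangentConeAt K x := by
  intro v hv
  obtain ⟨w, hw, hmem⟩ := exists_tendsto_add_smul_mem_of_mem_adjacentCone hK hv
  refine mem_tangentConeAt_of_seq (𝓝[>] (0 : ℝ)) (fun t => t⁻¹.toNNReal) (fun t => t • w t)
    ?_ hmem (hw.congr' ?_)
  · simpa using (tendsto_id.mono_left nhdsWithin_le_nhds).smul hw
  · filter_upwards [self_mem_nhdsWithin] with t (ht : 0 < t)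
    simp [NNReal.smul_def, smul_smul, ht.le, ht.ne']

end

theorem first_order_necessary_condition_general
    {X : Type*} [NormedAddCommGroup X] [NormedSpace ℝ X]
    (𝒰 : Set X) (h𝒰 : 𝒰.Nonempty) (ubar : X)
    (J : X → ℝ) (L : X →L[ℝ] ℝ) (hJ : HasFDerivAt J L ubar)
    (hmin : ∃ δ : ℝ, 0 < δ ∧ ∀ u ∈ 𝒰, ‖u - ubar‖ < δ → J ubar ≤ J u) :
    ∀ v ∈ adjacentCone 𝒰 ubar, 0 ≤ L v := by
  intro v hv
  obtain ⟨δ, hδ, hmin⟩ := hmin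
  have hlocal : IsLocalMinOn J 𝒰 ubar :=
    mem_nhdsWithin.2 ⟨ball ubar δ, isOpen_ball, mem_ball_self hδ,
      fun u ⟨hball, hu⟩ => hmin u hu (mem_ball_iff_norm.1 hball)⟩
  exact hlocal.hasFDerivWithinAt_nonneg hJ.hasFDerivWithinAt
    (adjacentCone_subset_posTangentConeAt h𝒰 ubar hv)

theorem first_order_necessary_condition
    {X : Type*} [NormedAddCommGroup X] [NormedSpace ℝ X]
    (𝒰 : Set X) (h𝒰 : 𝒰.Nonempty) (ubar : X) (hubar : ubar ∈ 𝒰)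
    (J : X → ℝ) (L : X →L[ℝ] ℝ) (hJ : HasFDerivAt J L ubar)
    (hmin : ∃ δ : ℝ, 0 < δ ∧ ∀ u ∈ 𝒰, ‖u - ubar‖ < δ → J ubar ≤ J u) :
    ∀ v ∈ adjacentCone 𝒰 ubar, 0 ≤ L v :=
  first_order_necessary_condition_general 𝒰 h𝒰 ubar J L hJ hmin
end

section
/- Let X be a real normed space, 𝒰 ⊆ X a nonempty set, ū ∈ 𝒰, and J : X → ℝ. Assume there exist a continuous linear functional L on X and a continuous bilinear form B on X × X such that J(ū + w) = J(ū) + L(w) + ½B(w,w) + o(‖w‖²) as w → 0, and that ū is a local minimizer of J over 𝒰 (there exists δ > 0 with J(ū) ≤ J(u) for all u ∈ 𝒰 with ‖u − ū‖ < δ). Then for every v ∈ T_𝒰(ū) with L(v) = 0 and every h ∈ T²_𝒰(ū, v), one has L(h) + ½B(v,v) ≥ 0. -/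
open Filter Topology Metric Asymptotics

/-- The second-order adjacent subset to `K` at `(x, v)`. -/
def adjacentCone2 {X : Type*} [NormedAddCommGroup X] [NormedSpace ℝ X]
    (K : Set X) (x v : X) : Set X :=
  {h | Tendsto (fun ε : ℝ => infDist (x + ε • v + ε ^ 2 • h) K / ε ^ 2) (𝓝[>] (0 : ℝ)) (𝓝 0)}

/-!
A vector `h` in the second-order adjacent set yields feasible points `ū + ε v + ε² k ε` with
`k ε → h` as `ε → 0⁺`. Since `L v = 0`, the second-order expansion of `J` makes the quotients
`(J (ū + ε v + ε² k ε) - J ū) / ε²` converge to `L h + ½ B(v, v)`, and local minimality makes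
them eventually nonnegative.
-/

section

variable {X : Type*} [NormedAddCommGroup X] [NormedSpace ℝ X]

theorem exists_tendsto_of_mem_adjacentCone2 {K : Set X} {x v h : X} (hK : K.Nonempty)
    (hh : h ∈ adjacentCone2 K x v) :
    ∃ k : ℝ → X, Tendsto k (𝓝[>] 0) (𝓝 h) ∧ ∀ ε > 0, x + ε • v + ε ^ 2 • k ε ∈ K := by
  set p : ℝ → X := fun ε => x + ε • v + ε ^ 2 • h
  -- any slack that is `o(ε²)` would do in place of `ε³`
  have hnear : ∀ ε > 0, ∃ z ∈ K, dist (p ε) z < infDist (p ε) K + ε ^ 3 := fun ε hε =>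
    (infDist_lt_iff hK).1 (lt_add_of_pos_right _ (by positivity))
  choose! z hzK hzp using hnear
  refine ⟨fun ε => h + (ε ^ 2)⁻¹ • (z ε - p ε), ?_, fun ε hε => ?_⟩
  · have hbound : ∀ᶠ ε in 𝓝[>] (0 : ℝ),
        ‖(ε ^ 2)⁻¹ • (z ε - p ε)‖ ≤ infDist (p ε) K / ε ^ 2 + ε := by
      filter_upwards [self_mem_nhdsWithin] with ε (hε : 0 < ε)
      rw [norm_smul, norm_inv, norm_pow, Real.norm_of_nonneg hε.le, ← dist_eq_norm, dist_comm]
      calc (ε ^ 2)⁻¹ * dist (p ε) (z ε) ≤ (ε ^ 2)⁻¹ * (infDist (p ε) K + ε ^ 3) := by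
            gcongr; exact (hzp ε hε).le
        _ = infDist (p ε) K / ε ^ 2 + ε := by field_simp
    have hlim : Tendsto (fun ε => infDist (p ε) K / ε ^ 2 + ε) (𝓝[>] 0) (𝓝 0) := by
      simpa using hh.add (tendsto_nhdsWithin_of_tendsto_nhds tendsto_id)
    simpa using tendsto_const_nhds.add (squeeze_zero_norm' hbound hlim)
  · have hε2 : ε ^ 2 ≠ 0 := by positivity
    convert hzK ε hε using 1
    rw [smul_add, smul_inv_smul₀ hε2]
    simp only [p]
    abel

theorem Asymptotics.IsLittleO.comp_smul_of_tendsto {f : X → ℝ}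
    (hf : f =o[𝓝 0] fun w => ‖w‖ ^ 2) {l : Filter ℝ} (hl : l ≤ 𝓝 0) {y : ℝ → X} {a : X}
    (hy : Tendsto y l (𝓝 a)) :
    (fun ε => f (ε • y ε)) =o[l] fun ε => ε ^ 2 := by
  have hsmall : Tendsto (fun ε => ε • y ε) l (𝓝 0) := by
    simpa using (tendsto_id.mono_left hl).smul hy
  have hsq : (fun ε => ‖ε • y ε‖ ^ 2) =O[l] fun ε => ε ^ 2 := by
    have := (isBigO_refl (fun ε : ℝ => ε ^ 2) l).mul
      (Tendsto.isBigO_one (F := ℝ) (hy.norm.pow 2))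
    simpa [norm_smul, mul_pow] using this
  exact (hf.comp_tendsto hsmall).trans_isBigO hsq

theorem tendsto_second_order_difference_quotient {J : X → ℝ} {L : X →L[ℝ] ℝ}
    {B : X →L[ℝ] X →L[ℝ] ℝ} {x v h : X}
    (hexp : (fun w => J (x + w) - J x - L w - (1 / 2) * B w w) =o[𝓝 0] fun w => ‖w‖ ^ 2)
    (hLv : L v = 0) {k : ℝ → X} (hk : Tendsto k (𝓝[>] 0) (𝓝 h)) :
    Tendsto (fun ε => (J (x + ε • v + ε ^ 2 • k ε) - J x) / ε ^ 2) (𝓝[>] 0)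
      (𝓝 (L h + 1 / 2 * B v v)) := by
  set y : ℝ → X := fun ε => v + ε • k ε
  have hy : Tendsto y (𝓝[>] 0) (𝓝 v) := by
    simpa using tendsto_const_nhds.add
      ((tendsto_nhdsWithin_of_tendsto_nhds tendsto_id).smul hk)
  have hrem : Tendsto (fun ε =>
      (J (x + ε • y ε) - J x - L (ε • y ε) - 1 / 2 * B (ε • y ε) (ε • y ε)) / ε ^ 2)
      (𝓝[>] 0) (𝓝 0) :=
    (hexp.comp_smul_of_tendsto nhdsWithin_le_nhds hy).tendsto_div_nhds_zero
  have hdiag : Tendsto (fun ε => B (y ε) (y ε)) (𝓝[>] 0) (𝓝 (B v v)) :=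
    ((show Continuous fun u => B u u by fun_prop).tendsto v).comp hy
  have hlim := (((L.continuous.tendsto h).comp hk).add (hdiag.const_mul (1 / 2))).add hrem
  rw [add_zero] at hlim
  refine hlim.congr' ?_
  filter_upwards [self_mem_nhdsWithin] with ε (hε : 0 < ε)
  have hpt : x + ε • v + ε ^ 2 • k ε = x + ε • y ε := by
    simp only [y, smul_add, smul_smul, sq, add_assoc]
  simp only [Function.comp_apply, hpt, map_smul, smul_apply, smul_eq_mul, y, map_add, hLv]
  field_simp
  ring

end

theorem second_order_necessary_condition_general
    {X : Type*} [NormedAddCommGroup X] [NormedSpace ℝ X]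
    (𝒰 : Set X) (h𝒰 : 𝒰.Nonempty) (ubar : X)
    (J : X → ℝ) (L : X →L[ℝ] ℝ) (B : X →L[ℝ] X →L[ℝ] ℝ)
    (hexp : (fun w : X => J (ubar + w) - J ubar - L w - (1 / 2) * B w w)
      =o[𝓝 (0 : X)] fun w : X => ‖w‖ ^ 2)
    (hmin : ∃ δ : ℝ, 0 < δ ∧ ∀ u ∈ 𝒰, ‖u - ubar‖ < δ → J ubar ≤ J u) :
    ∀ v ∈ adjacentCone 𝒰 ubar, L v = 0 →
      ∀ h ∈ adjacentCone2 𝒰 ubar v, 0 ≤ L h + (1 / 2) * B v v := by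
  intro v _ hLv h hh
  obtain ⟨δ, hδ, hmin⟩ := hmin
  obtain ⟨k, hk, hk𝒰⟩ := exists_tendsto_of_mem_adjacentCone2 h𝒰 hh
  have hcurve : Tendsto (fun ε => ubar + ε • v + ε ^ 2 • k ε) (𝓝[>] 0) (𝓝 ubar) := by
    have hε : Tendsto (fun ε : ℝ => ε) (𝓝[>] 0) (𝓝 0) :=
      tendsto_nhdsWithin_of_tendsto_nhds tendsto_id
    simpa using (tendsto_const_nhds.add (hε.smul tendsto_const_nhds)).add ((hε.pow 2).smul hk)
  refine ge_of_tendsto (tendsto_second_order_difference_quotient hexp hLv hk) ?_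
  filter_upwards [self_mem_nhdsWithin, hcurve.eventually (ball_mem_nhds ubar hδ)]
    with ε (hε : 0 < ε) hnear
  exact div_nonneg (sub_nonneg.2 (hmin _ (hk𝒰 ε hε) (by rwa [← dist_eq_norm]))) (sq_nonneg ε)

theorem second_order_necessary_condition
    {X : Type*} [NormedAddCommGroup X] [NormedSpace ℝ X]
    (𝒰 : Set X) (h𝒰 : 𝒰.Nonempty) (ubar : X) (hubar : ubar ∈ 𝒰)
    (J : X → ℝ) (L : X →L[ℝ] ℝ) (B : X →L[ℝ] X →L[ℝ] ℝ)
    (hexp : (fun w : X => J (ubar + w) - J ubar - L w - (1 / 2) * B w w)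
      =o[𝓝 (0 : X)] fun w : X => ‖w‖ ^ 2)
    (hmin : ∃ δ : ℝ, 0 < δ ∧ ∀ u ∈ 𝒰, ‖u - ubar‖ < δ → J ubar ≤ J u) :
    ∀ v ∈ adjacentCone 𝒰 ubar, L v = 0 →
      ∀ h ∈ adjacentCone2 𝒰 ubar v, 0 ≤ L h + (1 / 2) * B v v :=
  second_order_necessary_condition_general 𝒰 h𝒰 ubar J L B hexp hmin
end

section
/- Let (S, 𝒜, μ) be a complete finite measure space, H̃ a separable real Hilbert space, and U ⊆ H̃ a nonempty closed set. Let 𝒰 := {u ∈ L²(S, μ; H̃) : u(s) ∈ U for a.e. s} and let ū ∈ 𝒰. If v ∈ L²(S, μ; H̃) satisfies v(s) ∈ T_U(ū(s)) for a.e. s ∈ S, then v belongs to the adjacent cone T_𝒰(ū) computed in the Hilbert space L²(S, μ; H̃); that is, lim_{ε→0⁺} dist_{L²}(ū + εv, 𝒰)/ε = 0. -/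
open Filter Topology Metric MeasureTheory
open scoped ENNReal NNReal

theorem exists_stronglyMeasurable_mem_dist_lt_infDist_add {S E : Type*} [MeasurableSpace S]
    [PseudoMetricSpace E] {U : Set E} (hU : U.Nonempty) (hUs : TopologicalSpace.IsSeparable U)
    {f : S → E} (hf : StronglyMeasurable f) {δ : ℝ} (hδ : 0 < δ) :
    ∃ u : S → E, StronglyMeasurable u ∧ (∀ s, u s ∈ U) ∧
      ∀ s, dist (f s) (u s) < infDist (f s) U + δ := by
  classical
  obtain ⟨t, htU, htc, hUt⟩ := hUs.exists_countable_dense_subset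
  obtain ⟨x, rfl⟩ := htc.exists_eq_range (hU.mono hUt).of_closure
  have hex : ∀ s, ∃ n, dist (f s) (x n) < infDist (f s) U + δ := by
    intro s
    have : infDist (f s) (Set.range x) < infDist (f s) U + δ := by
      rw [← infDist_closure]
      linarith [infDist_le_infDist_of_subset hUt hU (x := f s)]
    simpa using (infDist_lt_iff (Set.range_nonempty x)).1 this
  have hN : Measurable fun s => Nat.find (hex s) := by
    refine measurable_find hex fun n => measurableSet_lt ?_ ?_
    · exact (hf.dist stronglyMeasurable_const).measurable
    · exact ((continuous_infDist_pt U).comp_stronglyMeasurable hf).measurable.add_const δ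
  exact ⟨fun s => x (Nat.find (hex s)), StronglyMeasurable.of_discrete.comp_measurable hN,
    fun s => htU ⟨_, rfl⟩, fun s => Nat.find_spec (hex s)⟩

theorem tendsto_eLpNorm_zero_of_dominated {α ι E : Type*} [MeasurableSpace α] {μ : Measure α}
    [NormedAddCommGroup E] {p : ℝ≥0∞} (hp0 : p ≠ 0) (hp : p ≠ ∞)
    {l : Filter ι} [l.IsCountablyGenerated] {F : ι → α → E} {g : α → ℝ}
    (hF : ∀ᶠ i in l, AEStronglyMeasurable (F i) μ) (hg : MemLp g p μ)
    (hbound : ∀ᶠ i in l, ∀ᵐ a ∂μ, ‖F i a‖ ≤ g a)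
    (hlim : ∀ᵐ a ∂μ, Tendsto (fun i => F i a) l (𝓝 0)) :
    Tendsto (fun i => eLpNorm (F i) p μ) l (𝓝 0) := by
  have hp_pos : 0 < p.toReal := ENNReal.toReal_pos hp0 hp
  simp_rw [eLpNorm_eq_lintegral_rpow_enorm_toReal hp0 hp]
  have hrpow : Tendsto (fun y : ℝ≥0∞ => y ^ (1 / p.toReal)) (𝓝 0) (𝓝 0) := by
    simpa [hp_pos] using (ENNReal.continuous_rpow_const (y := 1 / p.toReal)).tendsto 0
  refine hrpow.comp ?_
  have hint : Tendsto (fun i => ∫⁻ a, ‖F i a‖ₑ ^ p.toReal ∂μ) l (𝓝 (∫⁻ _, 0 ∂μ)) := by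
    refine tendsto_lintegral_filter_of_dominated_convergence' (fun a => ‖g a‖ₑ ^ p.toReal)
      ?_ ?_ ?_ ?_
    · filter_upwards [hF] with i hi using hi.enorm.pow_const _
    · filter_upwards [hbound] with i hi
      filter_upwards [hi] with a ha
      exact ENNReal.rpow_le_rpow (enorm_le_iff_norm_le.2 (ha.trans (Real.le_norm_self _)))
        hp_pos.le
    · exact (lintegral_rpow_enorm_lt_top_of_eLpNorm_lt_top hp0 hp hg.eLpNorm_lt_top).ne
    · filter_upwards [hlim] with a ha
      have hcont : Continuous fun y : E => ‖y‖ₑ ^ p.toReal :=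
        (ENNReal.continuous_rpow_const).comp continuous_enorm
      simpa [hp_pos, Function.comp_def] using (hcont.tendsto 0).comp ha
  simpa using hint

theorem tendsto_eLpNorm_const_zero {S : Type*} [MeasurableSpace S] {μ : Measure S}
    [IsFiniteMeasure μ] {p : ℝ≥0∞} :
    Tendsto (fun c : ℝ => eLpNorm (fun _ : S => c) p μ) (𝓝 0) (𝓝 0) := by
  have hconst (c : ℝ) :
      ‖c‖ₑ * eLpNorm (fun _ : S => (1 : ℝ)) p μ = eLpNorm (fun _ : S => c) p μ := by
    rw [← eLpNorm_const_smul]; simp [Pi.smul_def]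
  simpa [hconst] using ENNReal.Tendsto.mul_const (continuous_enorm.tendsto (0 : ℝ))
    (Or.inr (memLp_const (1 : ℝ) (μ := μ) (p := p)).eLpNorm_lt_top.ne)

theorem ofReal_infDist_le_eLpNorm_infDist {S E : Type*} [MeasurableSpace S] {μ : Measure S}
    [IsFiniteMeasure μ] [NormedAddCommGroup E] {p : ℝ≥0∞} [Fact (1 ≤ p)] {U : Set E}
    (hU : U.Nonempty) (hUs : TopologicalSpace.IsSeparable U) (f : Lp E p μ) :
    ENNReal.ofReal (infDist f {u : Lp E p μ | ∀ᵐ s ∂μ, u s ∈ U}) ≤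
      eLpNorm (fun s => infDist (f s) U) p μ := by
  set D : S → ℝ := fun s => infDist (f s) U
  have hDm : StronglyMeasurable D :=
    (continuous_infDist_pt U).comp_stronglyMeasurable (Lp.stronglyMeasurable f)
  rcases eq_or_ne (eLpNorm D p μ) ∞ with hD | hD
  · simp [hD]
  have hδ_lim : Tendsto (fun δ : ℝ => eLpNorm D p μ + eLpNorm (fun _ : S => δ) p μ)
      (𝓝[>] 0) (𝓝 (eLpNorm D p μ)) := by
    simpa using tendsto_const_nhds.add (tendsto_eLpNorm_const_zero.mono_left nhdsWithin_le_nhds)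
  refine ge_of_tendsto hδ_lim ?_
  filter_upwards [self_mem_nhdsWithin] with δ (hδ : 0 < δ)
  obtain ⟨u, hum, huU, hud⟩ :=
    exists_stronglyMeasurable_mem_dist_lt_infDist_add hU hUs (Lp.stronglyMeasurable f) hδ
  have hdiff_le : ∀ s, ‖f s - u s‖ ≤ D s + δ := fun s => by
    rw [← dist_eq_norm]; exact (hud s).le
  have hDδ : MemLp (fun s => D s + δ) p μ :=
    MemLp.add ⟨hDm.aestronglyMeasurable, hD.lt_top⟩ (memLp_const δ)
  have hu : MemLp u p μ := by
    have : MemLp (fun s => f s - u s) p μ :=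
      hDδ.of_le ((Lp.stronglyMeasurable f).sub hum).aestronglyMeasurable
        (Eventually.of_forall fun s => (hdiff_le s).trans (Real.le_norm_self _))
    convert (Lp.memLp f).sub this using 1; ext s; simp
  have hmem : hu.toLp u ∈ {u : Lp E p μ | ∀ᵐ s ∂μ, u s ∈ U} := by
    filter_upwards [hu.coeFn_toLp] with s hs
    simpa [hs] using huU s
  calc ENNReal.ofReal (infDist f {u : Lp E p μ | ∀ᵐ s ∂μ, u s ∈ U})
      ≤ edist f (hu.toLp u) := by
        rw [edist_dist]; exact ENNReal.ofReal_le_ofReal (infDist_le_dist_of_mem hmem)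
    _ = eLpNorm (fun s => f s - u s) p μ := by
        rw [Lp.edist_def]
        exact eLpNorm_congr_ae ((EventuallyEq.refl _ _).sub hu.coeFn_toLp)
    _ ≤ eLpNorm (fun s => D s + δ) p μ :=
        eLpNorm_mono fun s => (hdiff_le s).trans (Real.le_norm_self _)
    _ ≤ eLpNorm D p μ + eLpNorm (fun _ : S => δ) p μ :=
        eLpNorm_add_le hDm.aestronglyMeasurable aestronglyMeasurable_const Fact.out

theorem infDist_add_smul_div_le_norm {X : Type*} [NormedAddCommGroup X] [NormedSpace ℝ X]
    {K : Set X} {x : X} (hx : x ∈ K) (w : X) {ε : ℝ} (hε : 0 < ε) :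
    infDist (x + ε • w) K / ε ≤ ‖w‖ := by
  rw [div_le_iff₀ hε]
  calc infDist (x + ε • w) K ≤ dist (x + ε • w) x := infDist_le_dist_of_mem hx
    _ = ‖w‖ * ε := by
      rw [dist_eq_norm, add_sub_cancel_left, norm_smul, Real.norm_of_nonneg hε.le, mul_comm]

theorem ofReal_infDist_add_smul_div_le {S E : Type*} [MeasurableSpace S] {μ : Measure S}
    [IsFiniteMeasure μ] [NormedAddCommGroup E] [NormedSpace ℝ E] {p : ℝ≥0∞} [Fact (1 ≤ p)]
    {U : Set E} (hU : U.Nonempty) (hUs : TopologicalSpace.IsSeparable U) (f w : Lp E p μ)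
    {ε : ℝ} (hε : 0 < ε) :
    ENNReal.ofReal (infDist (f + ε • w) {u : Lp E p μ | ∀ᵐ s ∂μ, u s ∈ U} / ε) ≤
      eLpNorm (fun s => infDist (f s + ε • w s) U / ε) p μ := by
  have hcoe : ⇑(f + ε • w) =ᵐ[μ] fun s => f s + ε • w s :=
    (Lp.coeFn_add f (ε • w)).trans ((EventuallyEq.refl _ _).add (Lp.coeFn_smul ε w))
  have hscale : (fun s => infDist (f s + ε • w s) U / ε) =
      ε⁻¹ • fun s => infDist (f s + ε • w s) U := by
    ext s; simp [div_eq_inv_mul]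
  rw [hscale, eLpNorm_const_smul, Real.enorm_of_nonneg (inv_nonneg.2 hε.le), div_eq_inv_mul,
    ENNReal.ofReal_mul (inv_nonneg.2 hε.le)]
  gcongr
  exact (ofReal_infDist_le_eLpNorm_infDist hU hUs _).trans_eq
    (eLpNorm_congr_ae (hcoe.fun_comp (infDist · U)))

theorem pointwise_adjacent_implies_L2_adjacent_general
    {S : Type*} [MeasurableSpace S] (μ : Measure S) [IsFiniteMeasure μ]
    {Ht : Type*} [NormedAddCommGroup Ht] [InnerProductSpace ℝ Ht]
    [SecondCountableTopology Ht]
    (U : Set Ht) (hUne : U.Nonempty)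
    (ubar : Lp Ht 2 μ) (hubar : ∀ᵐ s ∂μ, ubar s ∈ U)
    (v : Lp Ht 2 μ) (hv : ∀ᵐ s ∂μ, v s ∈ adjacentCone U (ubar s)) :
    v ∈ adjacentCone {u : Lp Ht 2 μ | ∀ᵐ s ∂μ, u s ∈ U} ubar := by
  set g : ℝ → S → ℝ := fun ε s => infDist (ubar s + ε • v s) U / ε
  have hg_meas (ε : ℝ) : AEStronglyMeasurable (g ε) μ :=
    ((continuous_infDist_pt U).comp_stronglyMeasurable ((Lp.stronglyMeasurable ubar).add
      ((Lp.stronglyMeasurable v).const_smul ε))).measurable.div_const ε |>.aestronglyMeasurable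
  have hg_bound : ∀ᶠ ε in 𝓝[>] (0 : ℝ), ∀ᵐ s ∂μ, ‖g ε s‖ ≤ ‖v s‖ := by
    filter_upwards [self_mem_nhdsWithin] with ε (hε : 0 < ε)
    filter_upwards [hubar] with s hs
    rw [Real.norm_of_nonneg (div_nonneg infDist_nonneg hε.le)]
    exact infDist_add_smul_div_le_norm hs (v s) hε
  have hg_lim : Tendsto (fun ε => eLpNorm (g ε) 2 μ) (𝓝[>] 0) (𝓝 0) :=
    tendsto_eLpNorm_zero_of_dominated two_ne_zero ENNReal.ofNat_ne_top
      (Eventually.of_forall hg_meas) (Lp.memLp v).norm hg_bound hv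
  have hratio : Tendsto (fun ε => ENNReal.ofReal
      (infDist (ubar + ε • v) {u : Lp Ht 2 μ | ∀ᵐ s ∂μ, u s ∈ U} / ε)) (𝓝[>] 0) (𝓝 0) := by
    refine tendsto_of_tendsto_of_tendsto_of_le_of_le' tendsto_const_nhds hg_lim
      (Eventually.of_forall fun _ => zero_le) ?_
    filter_upwards [self_mem_nhdsWithin] with ε (hε : 0 < ε)
    exact ofReal_infDist_add_smul_div_le hUne (.of_separableSpace U) ubar v hε
  refine ((ENNReal.tendsto_toReal ENNReal.zero_ne_top).comp hratio).congr' ?_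
  filter_upwards [self_mem_nhdsWithin] with ε (hε : 0 < ε)
  exact ENNReal.toReal_ofReal (div_nonneg infDist_nonneg hε.le)

theorem pointwise_adjacent_implies_L2_adjacent
    {S : Type*} [MeasurableSpace S] (μ : Measure S) [IsFiniteMeasure μ]
    (hcomplete : μ.IsComplete)
    {Ht : Type*} [NormedAddCommGroup Ht] [InnerProductSpace ℝ Ht] [CompleteSpace Ht]
    [SecondCountableTopology Ht]
    (U : Set Ht) (hUne : U.Nonempty) (hUcl : IsClosed U)
    (ubar : Lp Ht 2 μ) (hubar : ∀ᵐ s ∂μ, ubar s ∈ U)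
    (v : Lp Ht 2 μ) (hv : ∀ᵐ s ∂μ, v s ∈ adjacentCone U (ubar s)) :
    v ∈ adjacentCone {u : Lp Ht 2 μ | ∀ᵐ s ∂μ, u s ∈ U} ubar :=
  pointwise_adjacent_implies_L2_adjacent_general μ U hUne ubar hubar v hv
end

section
/- Let (S, 𝒜, μ) be a complete finite measure space, H̃ a separable real Hilbert space, U ⊆ H̃ a nonempty closed set, ū : S → H̃ a measurable map with ū(s) ∈ U for a.e. s, and φ ∈ L²(S, μ; H̃). Suppose that for every v ∈ L²(S, μ; H̃) with v(s) ∈ T_U(ū(s)) for a.e. s one has ∫_S ⟨φ(s), v(s)⟩ dμ(s) ≤ 0. Then for a.e. s ∈ S, φ(s) ∈ N_U(ū(s)), i.e., ⟨φ(s), v⟩ ≤ 0 for every v ∈ T_U(ū(s)). -/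
/-!
If the conclusion fails, the set of `s` admitting some `w ∈ T_U(ū s)` with `⟪φ s, w⟫ > 0` is not
null. It is the preimage under `s ↦ (ū s, φ s)` of the projection of a Borel set
`E ⊆ (H̃ × H̃) × H̃`, so it suffices to choose such a `w` measurably on a non-null set: rescaled to
norm at most `1` and extended by `0`, it is an `L²` test function with positive integral.

Borel sets need not admit measurable selections, but `E` is a continuous image of `ℕ → ℕ` and the
image measure is outer regular. Choosing bounds `n i` greedily produces a compact box
`∏ i, [0, n i]` whose image still projects onto a set of positive measure, and over that closed
projection a measurable section is obtained by choosing digits greedily (the largest admissible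
one), each digit being decided by finitely many closed sets.
-/

open Filter Topology Metric MeasureTheory
open scoped RealInnerProductSpace

open Set

section adjacentCone

variable {X : Type*} [NormedAddCommGroup X] [NormedSpace ℝ X] {K : Set X} {x : X}

theorem zero_mem_adjacentCone_s13 (hx : x ∈ K) : (0 : X) ∈ adjacentCone K x := by
  simp [adjacentCone, infDist_zero_of_mem hx]

theorem smul_mem_adjacentCone {c : ℝ} (hc : 0 < c) {v : X} (hv : v ∈ adjacentCone K x) :
    c • v ∈ adjacentCone K x := by
  have hscale : Tendsto (fun ε : ℝ => ε * c) (𝓝[>] 0) (𝓝[>] 0) :=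
    tendsto_nhdsWithin_of_tendsto_nhds_of_eventually_within _
      (((continuous_mul_const c).tendsto' 0 0 (zero_mul c)).mono_left nhdsWithin_le_nhds)
      (eventually_nhdsWithin_of_forall fun ε hε => mul_pos hε hc)
  have := (hv.comp hscale).const_mul c
  rw [mul_zero] at this
  refine this.congr' (eventually_nhdsWithin_of_forall fun ε (hε : 0 < ε) => ?_)
  simp only [Function.comp_apply, mul_smul]
  field_simp

theorem measurableSet_adjacentCone_graph [SecondCountableTopology X] [MeasurableSpace X]
    [OpensMeasurableSpace X] : MeasurableSet {p : X × X | p.2 ∈ adjacentCone K p.1} := by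
  have hbasis := nhdsWithin_hasBasis (nhds_basis_ball_inv_nat_succ (x := (0 : ℝ))) (Ioi 0)
  have hgraph : {p : X × X | p.2 ∈ adjacentCone K p.1} = ⋂ j : ℕ, ⋃ m : ℕ,
      ⋂ ε ∈ ball (0 : ℝ) (1 / (m + 1)) ∩ Ioi 0,
        {p : X × X | infDist (p.1 + ε • p.2) K / ε ∈ closedBall 0 (1 / (j + 1))} := by
    ext p
    simp [adjacentCone, hbasis.tendsto_iff nhds_basis_closedBall_inv_nat_succ]
  rw [hgraph]
  refine .iInter fun j => .iUnion fun m => IsClosed.measurableSet ?_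
  exact isClosed_biInter fun ε _ => isClosed_closedBall.preimage (by fun_prop)

end adjacentCone

def greedySeq (next : (ℕ → ℕ) → ℕ → ℕ) (k : ℕ) : ℕ :=
  next (fun i => if i < k then greedySeq next i else 0) k

theorem greedySeq_eq {next : (ℕ → ℕ) → ℕ → ℕ}
    (hnext : ∀ l l' k, (∀ i < k, l i = l' i) → next l k = next l' k) (k : ℕ) :
    greedySeq next k = next (greedySeq next) k := by
  rw [greedySeq]
  exact hnext _ _ _ fun i hi => if_pos hi

section BaireSpace

variable {Z : Type*} [TopologicalSpace Z]

theorem isCompact_pi_Iic (n : ℕ → ℕ) : IsCompact (univ.pi fun i => Iic (n i)) :=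
  isCompact_univ_pi fun i => (finite_Iic (n i)).isCompact

theorem exists_pi_Iio_subset_of_pi_univ_subset (n : ℕ → ℕ) {O : Set (ℕ → ℕ)} (hO : IsOpen O)
    (hnO : univ.pi (fun i => Iic (n i)) ⊆ O) : ∃ k, (Iio k).pi (fun i => Iic (n i)) ⊆ O := by
  set W : ℕ → Set (ℕ → ℕ) := fun k => {σ | PiNat.cylinder σ k ⊆ O}
  have hW_open : ∀ k, IsOpen (W k) := fun k => isOpen_iff_forall_mem_open.2 fun σ hσ =>
    ⟨PiNat.cylinder σ k, fun τ hτ => show _ ⊆ O by rwa [PiNat.mem_cylinder_iff_eq.1 hτ],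
      PiNat.isOpen_cylinder _ σ k, PiNat.self_mem_cylinder σ k⟩
  have hW_mono : Monotone W := fun k l hkl σ hσ => (PiNat.cylinder_anti σ hkl).trans hσ
  have hOW : O ⊆ ⋃ k, W k := fun σ hσ => by
    obtain ⟨_, ⟨τ, k, rfl⟩, hστ, hτO⟩ :=
      (PiNat.isTopologicalBasis_cylinders _).exists_subset_of_mem_open hσ hO
    exact mem_iUnion.2 ⟨k, show _ ⊆ O by rwa [PiNat.mem_cylinder_iff_eq.1 hστ]⟩
  obtain ⟨k, hk⟩ := (isCompact_pi_Iic n).elim_directed_cover W hW_open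
    (hnO.trans hOW) hW_mono.directed_le
  refine ⟨k, fun σ hσ => hk (fun i _ => min_le_right (σ i) (n i)) fun i hi => ?_⟩
  exact (min_eq_left (hσ i hi)).symm

theorem exists_measure_image_pi_Iic_ne_zero [MeasurableSpace Z] (ρ : Measure Z) [ρ.OuterRegular]
    {f : (ℕ → ℕ) → Z} (hf : Continuous f) (h : ρ (range f) ≠ 0) :
    ∃ n : ℕ → ℕ, ρ (f '' univ.pi fun i => Iic (n i)) ≠ 0 := by
  obtain ⟨a, ha0, ha⟩ := exists_between (pos_iff_ne_zero.2 h)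
  -- `ρ` is continuous along increasing unions of arbitrary sets, so one threshold `a` survives
  -- every greedy step.
  have hsplit : ∀ (l : ℕ → ℕ) k, a < ρ (f '' (Iio k).pi fun i => Iic (l i)) →
      ∃ m, a < ρ (f '' ((Iio k).pi (fun i => Iic (l i)) ∩ {σ | σ k ≤ m})) := by
    intro l k hlk
    have hmono : Monotone fun m => f '' ((Iio k).pi (fun i => Iic (l i)) ∩ {σ | σ k ≤ m}) :=
      fun m m' hm => image_mono (inter_subset_inter_right _ fun σ hσ => le_trans hσ hm)
    rw [← lt_iSup_iff, ← hmono.measure_iUnion, ← image_iUnion, ← inter_iUnion]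
    convert hlk
    exact inter_eq_left.2 fun σ _ => mem_iUnion.2 ⟨σ k, le_refl (σ k)⟩
  set next : (ℕ → ℕ) → ℕ → ℕ := fun l k =>
    Classical.epsilon fun m => a < ρ (f '' ((Iio k).pi (fun i => Iic (l i)) ∩ {σ | σ k ≤ m}))
  have hnext : ∀ l l' k, (∀ i < k, l i = l' i) → next l k = next l' k := fun l l' k h => by
    simp only [next, pi_congr rfl fun i (hi : i ∈ Iio k) => congrArg Iic (h i hi)]
  set n := greedySeq next
  have hn : ∀ k, a < ρ (f '' (Iio k).pi fun i => Iic (n i)) := by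
    intro k
    induction k with
    | zero => simpa using ha
    | succ k ih =>
      have hnk : a < ρ (f '' ((Iio k).pi (fun i => Iic (n i)) ∩ {σ | σ k ≤ n k})) := by
        rw [show n k = next n k from greedySeq_eq hnext k]
        exact Classical.epsilon_spec (hsplit n k ih)
      convert hnk using 3
      ext σ
      simp only [mem_inter_iff, Set.mem_pi, mem_Iio, mem_Iic, Nat.forall_lt_succ_right]
      rfl
  refine ⟨n, fun h0 => ?_⟩
  obtain ⟨O, hO, hOopen, hρO⟩ := exists_isOpen_lt_of_lt _ a (h0 ▸ ha0)
  obtain ⟨k, hk⟩ := exists_pi_Iio_subset_of_pi_univ_subset n (hOopen.preimage hf)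
    (image_subset_iff.1 hO)
  exact not_le.2 (hn k) ((measure_mono (image_subset_iff.2 hk)).trans hρO.le)

theorem exists_measurable_section_pi_Iic [MeasurableSpace Z] [T2Space Z] [OpensMeasurableSpace Z]
    {f : (ℕ → ℕ) → Z} (hf : Continuous f) (n : ℕ → ℕ) :
    ∃ g : Z → ℕ → ℕ, Measurable g ∧ ∀ z ∈ f '' univ.pi (fun i => Iic (n i)),
      g z ∈ univ.pi (fun i => Iic (n i)) ∧ f (g z) = z := by
  classical
  set B := univ.pi fun i => Iic (n i)
  have hclosed : ∀ l k m, IsClosed (f '' (B ∩ PiNat.cylinder l k ∩ {σ | σ k = m})) :=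
    fun l k m => (((isCompact_pi_Iic n).inter_right
      (PiNat.cylinder_eq_pi l k ▸ isClosed_set_pi fun i _ => isClosed_singleton)).inter_right
      (isClosed_eq (continuous_apply k) continuous_const) |>.image hf).isClosed
  set next : Z → (ℕ → ℕ) → ℕ → ℕ := fun z l k =>
    Nat.findGreatest (fun m => z ∈ f '' (B ∩ PiNat.cylinder l k ∩ {σ | σ k = m})) (n k)
  have hnext : ∀ z l l' k, (∀ i < k, l i = l' i) → next z l k = next z l' k := by
    intro z l l' k h
    have hcyl : PiNat.cylinder l k = PiNat.cylinder l' k := by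
      ext σ
      simp only [PiNat.mem_cylinder_iff]
      exact forall₂_congr fun i hi => by rw [h i hi]
    simp only [next, hcyl]
  set g : Z → ℕ → ℕ := fun z => greedySeq (next z)
  refine ⟨g, measurable_pi_iff.2 fun k => ?_, fun z hz => ?_⟩
  · -- The `k`-th digit is a function of `z` and of the earlier digits, which range over the
    -- countable type `Fin k → ℕ`.
    induction k using Nat.strong_induction_on with
    | _ k ih =>
      let D : Z × (Fin k → ℕ) → ℕ := fun p =>
        next p.1 (fun i => if h : i < k then p.2 ⟨i, h⟩ else 0) k
      have hD : Measurable D := measurable_from_prod_countable_left fun q =>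
        measurable_findGreatest fun m _ =>
          (hclosed (fun i => if h : i < k then q ⟨i, h⟩ else 0) k m).measurableSet
      have hgD : (fun z => g z k) = fun z => D (z, fun i => g z i) := by
        funext z
        simp only [g, D, dite_eq_ite]
        rw [greedySeq]
      rw [hgD]
      exact hD.comp (measurable_id.prodMk (measurable_pi_lambda _ fun i => ih i i.2))
  have hinv : ∀ k, z ∈ f '' (B ∩ PiNat.cylinder (g z) k) := by
    intro k
    induction k with
    | zero => simpa using hz
    | succ k ih =>
      obtain ⟨σ, ⟨hσB, hσcyl⟩, hσz⟩ := ih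
      have hgk : z ∈ f '' (B ∩ PiNat.cylinder (g z) k ∩ {σ | σ k = g z k}) := by
        rw [show g z k = next z (g z) k from greedySeq_eq (hnext z) k]
        exact Nat.findGreatest_spec
          (P := fun m => z ∈ f '' (B ∩ PiNat.cylinder (g z) k ∩ {σ | σ k = m}))
          (hσB k trivial) ⟨σ, ⟨⟨hσB, hσcyl⟩, rfl⟩, hσz⟩
      have hcyl : PiNat.cylinder (g z) (k + 1) = PiNat.cylinder (g z) k ∩ {σ | σ k = g z k} := by
        ext σ
        simp only [mem_inter_iff, PiNat.mem_cylinder_iff, Nat.forall_lt_succ_right]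
        rfl
      rwa [hcyl, ← inter_assoc]
  refine ⟨fun k _ => ?_, ?_⟩
  · rw [show g z k = next z (g z) k from greedySeq_eq (hnext z) k]
    exact Nat.findGreatest_le _
  choose σ hσ hσz using hinv
  have hlim : Tendsto σ atTop (𝓝 (g z)) := tendsto_pi_nhds.2 fun i =>
    tendsto_atTop_of_eventually_const (i₀ := i + 1) fun k hk => (hσ k).2 i hk
  have hconst : Tendsto (f ∘ σ) atTop (𝓝 z) := by
    simp only [Function.comp_def, hσz, tendsto_const_nhds]
  exact tendsto_nhds_unique ((hf.tendsto _).comp hlim) hconst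

end BaireSpace

theorem MeasureTheory.AnalyticSet.exists_measurable_selection {Z W : Type*} [TopologicalSpace Z]
    [T2Space Z] [MeasurableSpace Z] [OpensMeasurableSpace Z] [TopologicalSpace W]
    [MeasurableSpace W] [BorelSpace W] {E : Set (Z × W)} (hE : AnalyticSet E) (ρ : Measure Z)
    [ρ.OuterRegular] (hρE : ρ (Prod.fst '' E) ≠ 0) :
    ∃ A, MeasurableSet A ∧ ρ A ≠ 0 ∧ ∃ v : Z → W, Measurable v ∧ ∀ z ∈ A, (z, v z) ∈ E := by
  rw [AnalyticSet] at hE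
  obtain rfl | ⟨e, he, rfl⟩ := hE
  · simp at hρE
  have hfst : Continuous (Prod.fst ∘ e) := continuous_fst.comp he
  obtain ⟨n, hn⟩ := exists_measure_image_pi_Iic_ne_zero ρ hfst (by rwa [range_comp])
  obtain ⟨g, hg, hgsec⟩ := exists_measurable_section_pi_Iic hfst n
  refine ⟨_, ((isCompact_pi_Iic n).image hfst).isClosed.measurableSet, hn,
    fun z => (e (g z)).2, (continuous_snd.comp he).measurable.comp hg, fun z hz => ?_⟩
  exact ⟨g z, Prod.ext (hgsec z hz).2 rfl⟩

theorem exists_Lp_mem_cone_integral_inner_pos {S E : Type*} [MeasurableSpace S] {μ : Measure S}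
    [IsFiniteMeasure μ] [NormedAddCommGroup E] [InnerProductSpace ℝ E] (C : S → Set E)
    (hC0 : ∀ᵐ s ∂μ, (0 : E) ∈ C s) (hCsmul : ∀ s, ∀ c : ℝ, 0 < c → ∀ w ∈ C s, c • w ∈ C s)
    (φ : Lp E 2 μ) {B : Set S} (hB : MeasurableSet B) (hμB : μ B ≠ 0) {w : S → E}
    (hw : AEStronglyMeasurable w μ) (hwB : ∀ s ∈ B, w s ∈ C s ∧ 0 < ⟪φ s, w s⟫) :
    ∃ v : Lp E 2 μ, (∀ᵐ s ∂μ, v s ∈ C s) ∧ 0 < ∫ s, ⟪φ s, v s⟫ ∂μ := by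
  set u : S → E := B.indicator fun s => (1 + ‖w s‖)⁻¹ • w s
  have hu_mem : ∀ s ∈ B, u s = (1 + ‖w s‖)⁻¹ • w s := fun s hs => indicator_of_mem hs _
  have hu_not : ∀ s ∉ B, u s = 0 := fun s hs => indicator_of_notMem hs _
  have hu_le : ∀ s, ‖u s‖ ≤ 1 := by
    intro s
    by_cases hs : s ∈ B
    · rw [hu_mem s hs, norm_smul, norm_inv, Real.norm_of_nonneg (by positivity),
        inv_mul_le_iff₀ (by positivity)]
      linarith
    · simp [hu_not s hs]
  have hu : MemLp u 2 μ :=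
    MemLp.of_bound (AEStronglyMeasurable.indicator (by fun_prop) hB) 1 (ae_of_all _ hu_le)
  have hvu : hu.toLp u =ᵐ[μ] u := hu.coeFn_toLp
  refine ⟨hu.toLp u, ?_, ?_⟩
  · filter_upwards [hvu, hC0] with s hvs h0
    rw [hvs]
    by_cases hs : s ∈ B
    · exact hu_mem s hs ▸ hCsmul s _ (by positivity) _ (hwB s hs).1
    · rwa [hu_not s hs]
  set F : S → ℝ := fun s => ⟪φ s, u s⟫
  have hF : (fun s => ⟪φ s, hu.toLp u s⟫) =ᵐ[μ] F := by
    filter_upwards [hvu] with s hs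
    rw [hs]
  have hF_pos : ∀ s ∈ B, 0 < F s := fun s hs => by
    simp only [F, hu_mem s hs, real_inner_smul_right]
    exact mul_pos (by positivity) (hwB s hs).2
  have hF_zero : ∀ s ∉ B, F s = 0 := fun s hs => by
    simp only [F, hu_not s hs, inner_zero_right]
  have hF_nonneg : 0 ≤ F := fun s => by
    by_cases hs : s ∈ B
    · exact (hF_pos s hs).le
    · exact (hF_zero s hs).ge
  have hF_support : Function.support F = B := by
    ext s
    by_cases hs : s ∈ B
    · simp [hs, (hF_pos s hs).ne']
    · simp [hs, hF_zero s hs]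
  rw [integral_congr_ae hF, integral_pos_iff_support_of_nonneg hF_nonneg
    ((L2.integrable_inner φ (hu.toLp u)).congr hF), hF_support]
  exact pos_iff_ne_zero.2 hμB

theorem integral_condition_implies_pointwise_normal_cone_general
    {S : Type*} [MeasurableSpace S] (μ : Measure S) [IsFiniteMeasure μ]
    {Ht : Type*} [NormedAddCommGroup Ht] [InnerProductSpace ℝ Ht] [CompleteSpace Ht]
    [SecondCountableTopology Ht] [MeasurableSpace Ht] [BorelSpace Ht]
    (U : Set Ht)
    (ubar : S → Ht) (hubarm : Measurable ubar) (hubarU : ∀ᵐ s ∂μ, ubar s ∈ U)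
    (φ : Lp Ht 2 μ)
    (hineq : ∀ v : Lp Ht 2 μ, (∀ᵐ s ∂μ, v s ∈ adjacentCone U (ubar s)) →
      ∫ s, ⟪φ s, v s⟫ ∂μ ≤ 0) :
    ∀ᵐ s ∂μ, ∀ w ∈ adjacentCone U (ubar s), ⟪φ s, w⟫ ≤ 0 := by
  set θ : S → Ht × Ht := fun s => (ubar s, φ s)
  have hθ : Measurable θ := hubarm.prodMk (Lp.stronglyMeasurable φ).measurable
  set E : Set ((Ht × Ht) × Ht) := {q | q.2 ∈ adjacentCone U q.1.1 ∧ 0 < ⟪q.1.2, q.2⟫}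
  have hE : MeasurableSet E :=
    ((measurableSet_adjacentCone_graph (K := U)).preimage
      (show Measurable fun q : (Ht × Ht) × Ht => (q.1.1, q.2) by fun_prop)).inter
      (measurableSet_lt measurable_const
        (show Measurable fun q : (Ht × Ht) × Ht => ⟪q.1.2, q.2⟫ by fun_prop))
  rw [ae_iff]
  by_contra hbad
  have hbad_sub :
      {s | ¬ ∀ w ∈ adjacentCone U (ubar s), ⟪φ s, w⟫ ≤ 0} ⊆ θ ⁻¹' (Prod.fst '' E) := by
    intro s hs
    simp only [not_forall, not_le] at hs
    obtain ⟨w, hw, hpos⟩ := hs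
    exact ⟨(θ s, w), ⟨hw, hpos⟩, rfl⟩
  have hbadE : μ.map θ (Prod.fst '' E) ≠ 0 := fun h => hbad <| measure_mono_null hbad_sub <|
    nonpos_iff_eq_zero.1 ((Measure.le_map_apply hθ.aemeasurable _).trans h.le)
  obtain ⟨A, hA, hθA, sel, hsel, hselE⟩ := hE.analyticSet.exists_measurable_selection _ hbadE
  rw [Measure.map_apply hθ hA] at hθA
  have hselθ : ∀ s ∈ θ ⁻¹' A, sel (θ s) ∈ adjacentCone U (ubar s) ∧ 0 < ⟪φ s, sel (θ s)⟫ :=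
    fun s hs => hselE (θ s) hs
  obtain ⟨v, hvC, hvpos⟩ :=
    exists_Lp_mem_cone_integral_inner_pos (fun s => adjacentCone U (ubar s))
      (hubarU.mono fun s => zero_mem_adjacentCone_s13) (fun s c hc w hw => smul_mem_adjacentCone hc hw)
      φ (hA.preimage hθ) hθA (hsel.comp hθ).aestronglyMeasurable hselθ
  exact (hineq v hvC).not_gt hvpos

theorem integral_condition_implies_pointwise_normal_cone
    {S : Type*} [MeasurableSpace S] (μ : Measure S) [IsFiniteMeasure μ]
    (hcomplete : μ.IsComplete)
    {Ht : Type*} [NormedAddCommGroup Ht] [InnerProductSpace ℝ Ht] [CompleteSpace Ht]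
    [SecondCountableTopology Ht] [MeasurableSpace Ht] [BorelSpace Ht]
    (U : Set Ht) (hUne : U.Nonempty) (hUcl : IsClosed U)
    (ubar : S → Ht) (hubarm : Measurable ubar) (hubarU : ∀ᵐ s ∂μ, ubar s ∈ U)
    (φ : Lp Ht 2 μ)
    (hineq : ∀ v : Lp Ht 2 μ, (∀ᵐ s ∂μ, v s ∈ adjacentCone U (ubar s)) →
      ∫ s, ⟪φ s, v s⟫ ∂μ ≤ 0) :
    ∀ᵐ s ∂μ, ∀ w ∈ adjacentCone U (ubar s), ⟪φ s, w⟫ ≤ 0 :=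
  integral_condition_implies_pointwise_normal_cone_general μ U ubar hubarm hubarU φ hineq
end

section
/- Let (S, 𝒜, μ) be a complete finite measure space, H̃ a separable real Hilbert space, and U ⊆ H̃ a nonempty closed set. Let g : S × H̃ → ℝ be such that s ↦ g(s,u) is measurable for every u ∈ H̃, u ↦ g(s,u) is continuous for a.e. s ∈ S, and there exists an integrable ψ : S → ℝ with |g(s,u)| ≤ ψ(s) for all u ∈ U and a.e. s. Suppose there exists a measurable ū : S → H̃ with ū(s) ∈ U and g(s, ū(s)) = 0 for a.e. s, and that ∫_S g(s, u(s)) dμ(s) ≤ 0 for every measurable u : S → H̃ with u(s) ∈ U for a.e. s. Then for a.e. s ∈ S one has g(s,u) ≤ 0 for every u ∈ U. -/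
open MeasureTheory

theorem integral_condition_implies_pointwise_condition
    {S : Type*} [MeasurableSpace S] (μ : Measure S) [IsFiniteMeasure μ]
    (hcomplete : μ.IsComplete)
    {Ht : Type*} [NormedAddCommGroup Ht] [InnerProductSpace ℝ Ht] [CompleteSpace Ht]
    [SecondCountableTopology Ht] [MeasurableSpace Ht] [BorelSpace Ht]
    (U : Set Ht) (hUne : U.Nonempty) (hUcl : IsClosed U)
    (g : S → Ht → ℝ)
    (hmeas : ∀ u : Ht, Measurable fun s => g s u)
    (hcont : ∀ᵐ s ∂μ, Continuous fun u => g s u)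
    (ψ : S → ℝ) (hψ : Integrable ψ μ)
    (hbound : ∀ᵐ s ∂μ, ∀ u ∈ U, |g s u| ≤ ψ s)
    (ubar : S → Ht) (hubarm : Measurable ubar)
    (hubar : ∀ᵐ s ∂μ, ubar s ∈ U ∧ g s (ubar s) = 0)
    (hint : ∀ u : S → Ht, Measurable u → (∀ᵐ s ∂μ, u s ∈ U) →
      ∫ s, g s (u s) ∂μ ≤ 0) :
    ∀ᵐ s ∂μ, ∀ u ∈ U, g s u ≤ 0 := by
  -- Step 1: for each fixed u ∈ U, g s u ≤ 0 a.e.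
  have key : ∀ u ∈ U, ∀ᵐ s ∂μ, g s u ≤ 0 := by
    intro u hu
    classical
    have hginteg : Integrable (fun s => g s u) μ := by
      refine hψ.mono' (hmeas u).aestronglyMeasurable ?_
      filter_upwards [hbound] with s hs
      simpa [Real.norm_eq_abs] using hs u hu
    have hsetint : ∀ A : Set S, MeasurableSet A → ∫ s in A, g s u ∂μ ≤ 0 := by
      intro A hA
      set v : S → Ht := fun s => if s ∈ A then u else ubar s with hv
      have hvm : Measurable v := Measurable.ite hA measurable_const hubarm
      have hvU : ∀ᵐ s ∂μ, v s ∈ U := by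
        filter_upwards [hubar] with s hs
        by_cases h : s ∈ A <;> simp [hv, h, hu, hs.1]
      have h1 := hint v hvm hvU
      have h2 : (fun s => g s (v s)) =ᵐ[μ] A.indicator (fun s => g s u) := by
        filter_upwards [hubar] with s hs
        by_cases h : s ∈ A <;> simp [hv, h, hs.2, Set.indicator_of_mem,
          Set.indicator_of_notMem]
      calc ∫ s in A, g s u ∂μ = ∫ s, A.indicator (fun s => g s u) s ∂μ :=
            (integral_indicator hA).symm
        _ = ∫ s, g s (v s) ∂μ := integral_congr_ae h2.symm
        _ ≤ 0 := h1
    have hneg : 0 ≤ᵐ[μ] fun s => -(g s u) := by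
      refine ae_nonneg_of_forall_setIntegral_nonneg hginteg.neg ?_
      intro A hA _
      have := hsetint A hA
      rw [integral_neg]
      linarith
    filter_upwards [hneg] with s hs
    simpa using hs
  -- Step 2: countable dense subset of U
  obtain ⟨D0, hD0c, hD0d⟩ := TopologicalSpace.exists_countable_dense (↥U)
  set D : Set Ht := Subtype.val '' D0 with hD
  have hDc : D.Countable := hD0c.image _
  have hDU : D ⊆ U := by rintro x ⟨⟨y, hy⟩, _, rfl⟩; exact hy
  have hUD : U ⊆ closure D := by
    intro x hx
    have : (⟨x, hx⟩ : ↥U) ∈ closure D0 := hD0d.closure_eq ▸ Set.mem_univ _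
    have := (map_mem_closure continuous_subtype_val this (fun y hy => Set.mem_image_of_mem _ hy))
    exact this
  have hDae : ∀ᵐ s ∂μ, ∀ d ∈ D, g s d ≤ 0 :=
    (ae_ball_iff hDc).mpr fun d hd => key d (hDU hd)
  -- Step 3: combine with continuity
  filter_upwards [hcont, hDae] with s hc hD' u hu
  have hclosed : IsClosed {x : Ht | g s x ≤ 0} := isClosed_le hc continuous_const
  have hsub : D ⊆ {x : Ht | g s x ≤ 0} := fun d hd => hD' d hd
  exact hclosed.closure_subset_iff.mpr hsub (hUD hu)
end
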